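/- arXiv:1612.06193 — 9 statements merged into one kernel-verified Lean document; each statement's English description precedes it below -/
import Mathlib

section
/- Assume the habitats are symmetric: r = r_1 = r_2, g = g_1 = g_2, κ = κ_1 = κ_2, m = m_1 = m_2, with m > 0 and r − m > 0. Then: (i) the unique evolutionary stable strategy is dimorphic (has two elements) if and only if m/(2g) < θ^2, in which case it equals {−z^{D*}, z^{D*}} with z^{D*} = √(θ^2 − m^2/(4 θ^2 g^2)), and the total population sizes at its demographic equilibrium are N_1^{D*} = N_2^{D*} = (m^2/(4 θ^2 g) + r − m)/κ; (ii) if m/(2g) ≥ θ^2, the unique evolutionary stable strategy is the singleton {0}, with total population sizes N_1* = N_2* = (r − g θ^2)/κ. -/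
open Real Set Filter MeasureTheory

noncomputable def R1 (θ r1 r2 g1 g2 κ1 κ2 m1 m2 z N : ℝ) : ℝ :=
  r1 - g1 * (z + θ) ^ 2 - κ1 * N

noncomputable def R2 (θ r1 r2 g1 g2 κ1 κ2 m1 m2 z N : ℝ) : ℝ :=
  r2 - g2 * (z - θ) ^ 2 - κ2 * N

noncomputable def W (θ r1 r2 g1 g2 κ1 κ2 m1 m2 z N1 N2 : ℝ) : ℝ :=
  (R1 θ r1 r2 g1 g2 κ1 κ2 m1 m2 z N1 + R2 θ r1 r2 g1 g2 κ1 κ2 m1 m2 z N2 - m1 - m2 +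
    Real.sqrt ((R1 θ r1 r2 g1 g2 κ1 κ2 m1 m2 z N1 - R2 θ r1 r2 g1 g2 κ1 κ2 m1 m2 z N2 - m1 + m2) ^ 2 + 4 * m1 * m2)) / 2

/-- A nonempty finite set `Ω` together with positive weights `α1, α2` is an ESS
configuration: at each point of `Ω` the effective fitness vanishes and the weight vector
is in the kernel of the matrix `A`, and the effective fitness is nonpositive everywhere. -/
def IsESSWts (θ r1 r2 g1 g2 κ1 κ2 m1 m2 : ℝ) (Ω : Finset ℝ) (α1 α2 : ℝ → ℝ) : Prop :=
  Ω.Nonempty ∧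
  (∀ z ∈ Ω, 0 < α1 z ∧ 0 < α2 z) ∧
  (∀ z ∈ Ω, W θ r1 r2 g1 g2 κ1 κ2 m1 m2 z (∑ x ∈ Ω, α1 x) (∑ x ∈ Ω, α2 x) = 0) ∧
  (∀ z ∈ Ω,
    (R1 θ r1 r2 g1 g2 κ1 κ2 m1 m2 z (∑ x ∈ Ω, α1 x) - m1) * α1 z + m2 * α2 z = 0 ∧
    m1 * α1 z + (R2 θ r1 r2 g1 g2 κ1 κ2 m1 m2 z (∑ x ∈ Ω, α2 x) - m2) * α2 z = 0) ∧
  (∀ z : ℝ, W θ r1 r2 g1 g2 κ1 κ2 m1 m2 z (∑ x ∈ Ω, α1 x) (∑ x ∈ Ω, α2 x) ≤ 0)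

/-- `Ω` is an evolutionary stable strategy. -/
def IsESS (θ r1 r2 g1 g2 κ1 κ2 m1 m2 : ℝ) (Ω : Finset ℝ) : Prop :=
  ∃ α1 α2 : ℝ → ℝ, IsESSWts θ r1 r2 g1 g2 κ1 κ2 m1 m2 Ω α1 α2

/-- `Ω` is an ESS whose total population sizes at the demographic equilibrium are `N1, N2`. -/
def IsESSWith (θ r1 r2 g1 g2 κ1 κ2 m1 m2 : ℝ) (Ω : Finset ℝ) (N1 N2 : ℝ) : Prop :=
  ∃ α1 α2 : ℝ → ℝ, IsESSWts θ r1 r2 g1 g2 κ1 κ2 m1 m2 Ω α1 α2 ∧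
    N1 = ∑ x ∈ Ω, α1 x ∧ N2 = ∑ x ∈ Ω, α2 x

lemma cubic_zero_of (e1 e2 e3 c4 : ℝ)
    (h : ∀ x : ℝ, 0 ≤ e1*x + e2*x^2 + e3*x^3 + c4*x^4) : e1 = 0 := by
  have hc : Continuous fun x : ℝ => e1 + e2*x + e3*x^2 + c4*x^3 := by continuity
  have hpos : ∀ x ∈ Ioi (0:ℝ), 0 ≤ e1 + e2*x + e3*x^2 + c4*x^3 := by
    intro x hx
    have hx0 : 0 < x := hx
    have := h x
    nlinarith [this]
  have hneg : ∀ x ∈ Iio (0:ℝ), e1 + e2*x + e3*x^2 + c4*x^3 ≤ 0 := by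
    intro x hx
    have hx0 : x < 0 := hx
    have := h x
    nlinarith [this]
  have t1 : Tendsto (fun x : ℝ => e1 + e2*x + e3*x^2 + c4*x^3) (nhdsWithin 0 (Ioi 0)) (nhds e1) := by
    have := (hc.tendsto 0).mono_left (nhdsWithin_le_nhds (s := Ioi (0:ℝ)))
    simpa using this
  have t2 : Tendsto (fun x : ℝ => e1 + e2*x + e3*x^2 + c4*x^3) (nhdsWithin 0 (Iio 0)) (nhds e1) := by
    have := (hc.tendsto 0).mono_left (nhdsWithin_le_nhds (s := Iio (0:ℝ)))
    simpa using this
  have h1 : 0 ≤ e1 := ge_of_tendsto t1 (eventually_nhdsWithin_of_forall hpos)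
  have h2 : e1 ≤ 0 := le_of_tendsto t2 (eventually_nhdsWithin_of_forall hneg)
  linarith

lemma quad_nonneg_aux (e2 e3 c4 x : ℝ) (hx2 : 0 < x^2)
    (h : 0 ≤ e2*x^2 + e3*x^3 + c4*x^4) : 0 ≤ e2 + e3*x + c4*x^2 := by
  have h3 : (e2 + e3*x + c4*x^2)*x^2 = e2*x^2 + e3*x^3 + c4*x^4 := by ring
  have h4 : 0 ≤ (e2 + e3*x + c4*x^2)*x^2 := by rw [h3]; exact h
  exact (mul_nonneg_iff_of_pos_right hx2).mp h4

lemma disc_of (e2 e3 c4 : ℝ) (hc4 : 0 < c4)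
    (h : ∀ x : ℝ, 0 ≤ e2*x^2 + e3*x^3 + c4*x^4) : e3^2 ≤ 4*c4*e2 := by
  have hall : ∀ x : ℝ, 0 ≤ e2 + e3*x + c4*x^2 := by
    have hpos : ∀ x ∈ Ioi (0:ℝ), 0 ≤ e2 + e3*x + c4*x^2 := fun x hx =>
      quad_nonneg_aux e2 e3 c4 x (by have : (0:ℝ) < x := hx; positivity) (h x)
    intro x
    rcases lt_trichotomy x 0 with hx | hx | hx
    · exact quad_nonneg_aux e2 e3 c4 x (by have := mul_pos_of_neg_of_neg hx hx; nlinarith) (h x)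
    · subst hx
      have hc : Continuous fun x : ℝ => e2 + e3*x + c4*x^2 := by continuity
      have t1 : Tendsto (fun x : ℝ => e2 + e3*x + c4*x^2) (nhdsWithin 0 (Ioi 0)) (nhds e2) := by
        have := (hc.tendsto 0).mono_left (nhdsWithin_le_nhds (s := Ioi (0:ℝ)))
        simpa using this
      have h1 : 0 ≤ e2 := ge_of_tendsto t1 (eventually_nhdsWithin_of_forall hpos)
      simpa using h1
    · exact quad_nonneg_aux e2 e3 c4 x (by positivity) (h x)
  have hc4' : c4 ≠ 0 := ne_of_gt hc4
  have key : e2 + e3*(-e3/(2*c4)) + c4*(-e3/(2*c4))^2 = e2 - e3^2/(4*c4) := by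
    field_simp; ring
  have h0 := hall (-e3/(2*c4))
  rw [key] at h0
  have h5 : 0 ≤ (e2 - e3^2/(4*c4)) * (4*c4) := mul_nonneg h0 (by positivity)
  have h6 : (e2 - e3^2/(4*c4)) * (4*c4) = 4*c4*e2 - e3^2 := by field_simp
  linarith [h5, h6.symm ▸ h5]


lemma W_form (θ r g κ m z N1 N2 : ℝ) :
    W θ r r g g κ κ m m z N1 N2 =
      (-((g*(z+θ)^2 + (κ*N1+m-r)) + (g*(z-θ)^2 + (κ*N2+m-r))) +
        Real.sqrt (((g*(z+θ)^2 + (κ*N1+m-r)) - (g*(z-θ)^2 + (κ*N2+m-r)))^2 + 4*m^2))/2 := by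
  have hP : R1 θ r r g g κ κ m m z N1 = m - (g*(z+θ)^2 + (κ*N1+m-r)) := by
    unfold R1; ring
  have hQ : R2 θ r r g g κ κ m m z N2 = m - (g*(z-θ)^2 + (κ*N2+m-r)) := by
    unfold R2; ring
  unfold W
  rw [hP, hQ]
  rw [show (m - (g*(z+θ)^2 + (κ*N1+m-r)) - (m - (g*(z-θ)^2 + (κ*N2+m-r))) - m + m)^2 + 4*m*m
      = ((g*(z+θ)^2 + (κ*N1+m-r)) - (g*(z-θ)^2 + (κ*N2+m-r)))^2 + 4*m^2 from by ring]
  ring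

lemma W_nonpos (θ r g κ m z N1 N2 : ℝ)
    (hsum : 0 ≤ (g*(z+θ)^2 + (κ*N1+m-r)) + (g*(z-θ)^2 + (κ*N2+m-r)))
    (hprod : m^2 ≤ (g*(z+θ)^2 + (κ*N1+m-r)) * (g*(z-θ)^2 + (κ*N2+m-r))) :
    W θ r r g g κ κ m m z N1 N2 ≤ 0 := by
  rw [W_form]
  set P := g*(z+θ)^2 + (κ*N1+m-r) with hPdef
  set Q := g*(z-θ)^2 + (κ*N2+m-r) with hQdef
  have h1 : (P - Q)^2 + 4*m^2 ≤ (P+Q)^2 := by nlinarith [hprod]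
  have h2 : Real.sqrt ((P - Q)^2 + 4*m^2) ≤ P + Q := by
    calc Real.sqrt ((P - Q)^2 + 4*m^2) ≤ Real.sqrt ((P+Q)^2) := Real.sqrt_le_sqrt h1
      _ = P + Q := Real.sqrt_sq hsum
  linarith

lemma W_zero (θ r g κ m z N1 N2 : ℝ)
    (hsum : 0 ≤ (g*(z+θ)^2 + (κ*N1+m-r)) + (g*(z-θ)^2 + (κ*N2+m-r)))
    (hprod : (g*(z+θ)^2 + (κ*N1+m-r)) * (g*(z-θ)^2 + (κ*N2+m-r)) = m^2) :
    W θ r r g g κ κ m m z N1 N2 = 0 := by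
  rw [W_form]
  set P := g*(z+θ)^2 + (κ*N1+m-r) with hPdef
  set Q := g*(z-θ)^2 + (κ*N2+m-r) with hQdef
  have h1 : (P - Q)^2 + 4*m^2 = (P+Q)^2 := by nlinarith [hprod]
  rw [h1, Real.sqrt_sq hsum]
  ring

lemma W_nonpos_rev (θ r g κ m z N1 N2 : ℝ) (hm : 0 < m)
    (h : W θ r r g g κ κ m m z N1 N2 ≤ 0) :
    m^2 ≤ (g*(z+θ)^2 + (κ*N1+m-r)) * (g*(z-θ)^2 + (κ*N2+m-r)) ∧
      0 ≤ (g*(z+θ)^2 + (κ*N1+m-r)) ∧ 0 ≤ (g*(z-θ)^2 + (κ*N2+m-r)) := by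
  rw [W_form] at h
  set P := g*(z+θ)^2 + (κ*N1+m-r) with hPdef
  set Q := g*(z-θ)^2 + (κ*N2+m-r) with hQdef
  set S := Real.sqrt ((P - Q)^2 + 4*m^2) with hSdef
  have hS0 : 0 ≤ S := Real.sqrt_nonneg _
  have hSle : S ≤ P + Q := by linarith
  have hS2 : S^2 = (P - Q)^2 + 4*m^2 := Real.sq_sqrt (by positivity)
  have hS2m : 2*m ≤ S := by nlinarith [hS2, hS0, hm]
  have hsq : (P - Q)^2 + 4*m^2 ≤ (P+Q)^2 := by nlinarith [hS2, hSle, hS0]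
  have hprod : m^2 ≤ P * Q := by nlinarith [hsq]
  have hsum : 0 < P + Q := by linarith
  constructor
  · exact hprod
  constructor
  · nlinarith [hprod, hsum, hm]
  · nlinarith [hprod, hsum, hm]


lemma essMono (θ r g κ m : ℝ) (hθ : 0 < θ) (hg : 0 < g) (hκ : 0 < κ) (hm : 0 < m)
    (hrm : 0 < r - m) (h2 : 2*g*θ^2 ≤ m) :
    IsESSWith θ r r g g κ κ m m ({0} : Finset ℝ) ((r - g*θ^2)/κ) ((r - g*θ^2)/κ) := by
  set N := (r - g*θ^2)/κ with hNdef
  have hκN : κ*N = r - g*θ^2 := by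
    rw [hNdef]; field_simp
  have hN : 0 < N := by
    apply div_pos; nlinarith; exact hκ
  have hsum1 : (∑ x ∈ ({0}:Finset ℝ), (fun _ : ℝ => N) x) = N := Finset.sum_singleton _ _
  refine ⟨fun _ => N, fun _ => N, ⟨⟨0, Finset.mem_singleton_self 0⟩, ?_, ?_, ?_, ?_⟩, ?_, ?_⟩
  · intro z hz; exact ⟨hN, hN⟩
  · intro z hz
    rw [Finset.mem_singleton] at hz; subst hz
    rw [hsum1]
    apply W_zero
    · nlinarith [hκN, sq_nonneg (0+θ), sq_nonneg (0-θ)]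
    · linear_combination (2*m + κ*N - r + g*θ^2) * hκN
  · intro z hz
    rw [Finset.mem_singleton] at hz; subst hz
    rw [hsum1]
    constructor
    · show (R1 θ r r g g κ κ m m 0 N - m) * N + m * N = 0
      unfold R1
      linear_combination (-N)*hκN
    · show m * N + (R2 θ r r g g κ κ m m 0 N - m) * N = 0
      unfold R2
      linear_combination (-N)*hκN
  · intro z
    rw [hsum1]
    apply W_nonpos
    · nlinarith [hκN, sq_nonneg (z+θ), sq_nonneg (z-θ)]
    · rw [hκN]
      nlinarith [mul_nonneg (mul_nonneg hg.le (sq_nonneg z)) (show (0:ℝ) ≤ m - 2*g*θ^2 by linarith),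
        sq_nonneg (g*z^2)]
  · exact hsum1.symm
  · exact hsum1.symm


lemma essDi (θ r g κ m : ℝ) (hθ : 0 < θ) (hg : 0 < g) (hκ : 0 < κ) (hm : 0 < m)
    (hrm : 0 < r - m) (hlt : m < 2*g*θ^2) :
    IsESSWith θ r r g g κ κ m m
      ({-Real.sqrt (θ^2 - m^2/(4*θ^2*g^2)), Real.sqrt (θ^2 - m^2/(4*θ^2*g^2))} : Finset ℝ)
      ((m^2/(4*θ^2*g) + r - m)/κ) ((m^2/(4*θ^2*g) + r - m)/κ) := by
  have harg : 0 < θ^2 - m^2/(4*θ^2*g^2) := by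
    rw [sub_pos, div_lt_iff₀ (by positivity)]
    nlinarith
  set Z := Real.sqrt (θ^2 - m^2/(4*θ^2*g^2)) with hZdef
  have hZ : 0 < Z := Real.sqrt_pos.mpr harg
  have hZ2 : Z^2 = θ^2 - m^2/(4*θ^2*g^2) := Real.sq_sqrt harg.le
  set b : ℝ := m^2/(4*g*θ^2) with hbdef
  have hb : 0 < b := by positivity
  set Nd : ℝ := (m^2/(4*θ^2*g) + r - m)/κ with hNdef
  have hNd : 0 < Nd := by
    apply div_pos _ hκ
    have h0 : 0 < m^2/(4*θ^2*g) := by positivity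
    linarith
  have hκN : κ*Nd = m^2/(4*θ^2*g) + r - m := by
    rw [hNdef]; field_simp
  set p : ℝ := g*(Z+θ)^2 + b with hpdef
  set q : ℝ := g*(Z-θ)^2 + b with hqdef
  have hp : 0 < p := by positivity
  have h4b : 4*g*θ^2*b = m^2 := by rw [hbdef]; field_simp
  have hZθ : g*(Z^2-θ^2) + b = 0 := by
    rw [hZ2, hbdef]; field_simp; ring
  have hpq : p * q = m^2 := by
    rw [hpdef, hqdef]
    linear_combination (g*(Z^2-θ^2) + b)*hZθ + h4b
  set c : ℝ := Nd/(m + p) with hcdef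
  have hc : 0 < c := by positivity
  have hne : -Z ≠ Z := by intro h; nlinarith
  have hnm : (-Z) ∉ ({Z} : Finset ℝ) := Finset.notMem_singleton.mpr hne
  set α1 : ℝ → ℝ := fun z => if 0 ≤ z then m*c else p*c with hα1def
  set α2 : ℝ → ℝ := fun z => if 0 ≤ z then p*c else m*c with hα2def
  have hα1Z : α1 Z = m*c := if_pos hZ.le
  have hα1mZ : α1 (-Z) = p*c := if_neg (by linarith)
  have hα2Z : α2 Z = p*c := if_pos hZ.le
  have hα2mZ : α2 (-Z) = m*c := if_neg (by linarith)
  have hsum1 : (∑ x ∈ ({-Z, Z} : Finset ℝ), α1 x) = Nd := by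
    rw [Finset.sum_insert hnm, Finset.sum_singleton, hα1mZ, hα1Z, hcdef]
    field_simp; ring
  have hsum2 : (∑ x ∈ ({-Z, Z} : Finset ℝ), α2 x) = Nd := by
    rw [Finset.sum_insert hnm, Finset.sum_singleton, hα2mZ, hα2Z, hcdef]
    field_simp
  have hbκ : κ*Nd + m - r = b := by rw [hκN, hbdef]; ring
  refine ⟨α1, α2, ⟨⟨Z, by simp⟩, ?_, ?_, ?_, ?_⟩, hsum1.symm, hsum2.symm⟩
  · intro z hz
    rcases Finset.mem_insert.mp hz with h | h
    · subst h; rw [hα1mZ, hα2mZ]; exact ⟨by positivity, by positivity⟩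
    · rw [Finset.mem_singleton] at h; subst h
      rw [hα1Z, hα2Z]; exact ⟨by positivity, by positivity⟩
  · intro z hz
    rw [hsum1, hsum2]
    rcases Finset.mem_insert.mp hz with h | h
    · subst h
      apply W_zero <;> rw [hbκ]
      · positivity
      · linear_combination hpq
    · rw [Finset.mem_singleton] at h; subst h
      apply W_zero <;> rw [hbκ]
      · positivity
      · linear_combination hpq
  · intro z hz
    rw [hsum1, hsum2]
    have hR1Z : R1 θ r r g g κ κ m m Z Nd = m - p := by
      unfold R1; rw [hpdef]; linear_combination -hbκ
    have hR2Z : R2 θ r r g g κ κ m m Z Nd = m - q := by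
      unfold R2; rw [hqdef]; linear_combination -hbκ
    have hR1mZ : R1 θ r r g g κ κ m m (-Z) Nd = m - q := by
      unfold R1; rw [hqdef]; linear_combination -hbκ
    have hR2mZ : R2 θ r r g g κ κ m m (-Z) Nd = m - p := by
      unfold R2; rw [hpdef]; linear_combination -hbκ
    rcases Finset.mem_insert.mp hz with h | h
    · subst h
      rw [hR1mZ, hR2mZ, hα1mZ, hα2mZ]
      constructor
      · linear_combination (-c)*hpq
      · ring
    · rw [Finset.mem_singleton] at h; subst h
      rw [hR1Z, hR2Z, hα1Z, hα2Z]
      constructor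
      · ring
      · linear_combination (-c)*hpq
  · intro z
    rw [hsum1, hsum2]
    apply W_nonpos <;> rw [hbκ]
    · positivity
    · have key : (g*(z+θ)^2 + b)*(g*(z-θ)^2 + b) - m^2
          = (g*(z^2-θ^2)+b)^2 + (4*g*θ^2*b - m^2) := by ring
      linarith [key, h4b, sq_nonneg (g*(z^2-θ^2)+b)]


set_option maxHeartbeats 2000000 in
lemma classify (θ r g κ m : ℝ)
    (hθ : 0 < θ) (hg : 0 < g) (hκ : 0 < κ) (hm : 0 < m) (hrm : 0 < r - m)
    (Ω : Finset ℝ) (α1 α2 : ℝ → ℝ) (hE : IsESSWts θ r r g g κ κ m m Ω α1 α2) :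
    (m < 2*g*θ^2 ∧ Ω = ({-Real.sqrt (θ^2 - m^2/(4*θ^2*g^2)),
        Real.sqrt (θ^2 - m^2/(4*θ^2*g^2))} : Finset ℝ)) ∨
    (2*g*θ^2 ≤ m ∧ Ω = ({0} : Finset ℝ)) := by
  obtain ⟨hne, hpos, hW0, hker, hWle⟩ := hE
  set N1 := ∑ x ∈ Ω, α1 x with hN1
  set N2 := ∑ x ∈ Ω, α2 x with hN2
  set b1 := κ*N1 + m - r with hb1
  set b2 := κ*N2 + m - r with hb2
  clear_value N1 N2
  clear_value b1 b2
  have hglob : ∀ z : ℝ, m^2 ≤ (g*(z+θ)^2 + b1) * (g*(z-θ)^2 + b2) ∧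
      0 ≤ g*(z+θ)^2 + b1 ∧ 0 ≤ g*(z-θ)^2 + b2 := by
    intro z
    have := W_nonpos_rev θ r g κ m z N1 N2 hm (hWle z)
    rwa [← hb1, ← hb2] at this
  -- facts at points of Ω
  have hroot : ∀ u ∈ Ω,
      (g*(u+θ)^2+b1) * (g*(u-θ)^2+b2) = m^2 ∧
      (u+θ)*(g*(u-θ)^2+b2) + (u-θ)*(g*(u+θ)^2+b1) = 0 ∧
      4*g*θ^2 ≤ (g*(u+θ)^2+b1) + (g*(u-θ)^2+b2) ∧
      (g*(u+θ)^2+b1) * α1 u = m * α2 u := by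
    intro u hu
    obtain ⟨ha1, ha2⟩ := hpos u hu
    obtain ⟨hk1, hk2⟩ := hker u hu
    have hR1 : R1 θ r r g g κ κ m m u N1 = m - (g*(u+θ)^2+b1) := by
      unfold R1; rw [hb1]; ring
    have hR2 : R2 θ r r g g κ κ m m u N2 = m - (g*(u-θ)^2+b2) := by
      unfold R2; rw [hb2]; ring
    rw [hR1] at hk1
    rw [hR2] at hk2
    set P := g*(u+θ)^2+b1 with hP
    set Q := g*(u-θ)^2+b2 with hQ
    have hk1' : P * α1 u = m * α2 u := by linear_combination -hk1
    have hk2' : m * α1 u = Q * α2 u := by linear_combination hk2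
    have hPQ : P * Q = m^2 := by
      have hcan : (P*Q) * (α1 u * α2 u) = m^2 * (α1 u * α2 u) := by
        linear_combination (Q*α2 u)*hk1' - (m*α2 u)*hk2'
      exact mul_right_cancel₀ (ne_of_gt (mul_pos ha1 ha2)) hcan
    have hkey : ∀ h : ℝ, 0 ≤ (2*g*((u+θ)*Q + (u-θ)*P))*h
        + (g*(P+Q) + 4*g^2*(u^2-θ^2))*h^2 + (4*g^2*u)*h^3 + g^2*h^4 := by
      intro h
      have hgl := (hglob (u+h)).1
      have hid : (g*((u+h)+θ)^2+b1) * (g*((u+h)-θ)^2+b2)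
          = P*Q + (2*g*((u+θ)*Q + (u-θ)*P))*h
            + (g*(P+Q) + 4*g^2*(u^2-θ^2))*h^2 + (4*g^2*u)*h^3 + g^2*h^4 := by
        rw [hP, hQ]; ring
      rw [hid, hPQ] at hgl
      linarith
    have he1 : 2*g*((u+θ)*Q + (u-θ)*P) = 0 := cubic_zero_of _ _ _ _ hkey
    have he1' : (u+θ)*Q + (u-θ)*P = 0 := by
      have h2g : (2*g) ≠ 0 := by positivity
      exact (mul_eq_zero.mp he1).resolve_left h2g
    have hdisc : (4*g^2*u)^2 ≤ 4*g^2*(g*(P+Q) + 4*g^2*(u^2-θ^2)) := by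
      apply disc_of _ _ _ (by positivity)
      intro h
      have := hkey h
      rw [he1] at this
      linarith [this]
    have hsumge : 4*g*θ^2 ≤ P + Q := by
      nlinarith [hdisc, mul_pos (mul_pos hg hg) hg]
    exact ⟨hPQ, by linear_combination he1', hsumge, hk1'⟩
  -- positivity of b1, b2
  have hb1pos : 0 < b1 := by
    obtain ⟨hA, hB, hC⟩ := hglob (-θ)
    nlinarith [hA, hC, hm]
  have hb2pos : 0 < b2 := by
    obtain ⟨hA, hB, hC⟩ := hglob θ
    nlinarith [hA, hB, hm]
  obtain ⟨u, hu⟩ := hne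
  by_cases hcase : ∀ v ∈ Ω, v = u
  · -- singleton case
    right
    have hΩ : Ω = {u} := Finset.eq_singleton_iff_unique_mem.mpr ⟨hu, hcase⟩
    have hN1u : N1 = α1 u := by rw [hN1, hΩ, Finset.sum_singleton]
    have hN2u : N2 = α2 u := by rw [hN2, hΩ, Finset.sum_singleton]
    obtain ⟨hPQu, hDu, hE3u, hk1'⟩ := hroot u hu
    set x := g*(u+θ)^2+b1 with hx
    set y := g*(u-θ)^2+b2 with hy
    clear_value x y
    obtain ⟨hA, hB, hC⟩ := hglob u
    rw [← hx] at hA hB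
    rw [← hy] at hA hC
    have hxpos : 0 < x := by nlinarith [hA, hB, hC, hm]
    have hypos : 0 < y := by nlinarith [hA, hB, hC, hm]
    have hu' : u*(x^2+m^2) = θ*(x^2-m^2) := by
      linear_combination x*hDu - (u+θ)*hPQu
    have h1 : (u+θ)*(x^2+m^2) = 2*θ*x^2 := by linear_combination hu'
    have h2 : (u-θ)*(x^2+m^2) = -(2*θ*m^2) := by linear_combination hu'
    have h3 : g*(u+θ)^2*(x^2+m^2)^2 = 4*g*θ^2*x^4 := by
      linear_combination (g*((u+θ)*(x^2+m^2) + 2*θ*x^2))*h1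
    have h4 : g*(u-θ)^2*(x^2+m^2)^2 = 4*g*θ^2*m^4 := by
      linear_combination (g*((u-θ)*(x^2+m^2) - 2*θ*m^2))*h2
    have hA4 : m*(κ*(α2 u)) = x*(κ*(α1 u)) := by linear_combination (-κ)*hk1'
    have haveA : m*(y - g*(u-θ)^2 + (r-m)) = x*(x - g*(u+θ)^2 + (r-m)) := by
      have e1 : y - g*(u-θ)^2 + (r-m) = κ*(α2 u) := by
        rw [hy, hb2, hN2u]; ring
      have e2 : x - g*(u+θ)^2 + (r-m) = κ*(α1 u) := by
        rw [hx, hb1, hN1u]; ring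
      rw [e1, e2]; exact hA4
    have key : (m - x)*((m^2+m*x+x^2+(r-m)*x)*(x^2+m^2)^2
        - 4*g*θ^2*x*(x^4+m*x^3+m^2*x^2+m^3*x+m^4)) = 0 := by
      linear_combination (x*(x^2+m^2)^2)*haveA - (m*(x^2+m^2)^2)*hPQu + (m*x)*h4 - (x^2)*h3
    have hD4 : 4*g*θ^2*x ≤ x^2+m^2 := by
      nlinarith [hE3u, hxpos, hPQu]
    have hS4 : 0 < x^4+m*x^3+m^2*x^2+m^3*x+m^4 := by positivity
    have hBpos : 0 < (m^2+m*x+x^2+(r-m)*x)*(x^2+m^2)^2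
        - 4*g*θ^2*x*(x^4+m*x^3+m^2*x^2+m^3*x+m^4) := by
      have idB : (m^2+m*x+x^2+(r-m)*x)*(x^2+m^2)^2
          - 4*g*θ^2*x*(x^4+m*x^3+m^2*x^2+m^3*x+m^4)
          = (x^4+m*x^3+m^2*x^2+m^3*x+m^4)*((x^2+m^2) - 4*g*θ^2*x)
            + m^2*x^2*(x^2+m^2) + (r-m)*x*(x^2+m^2)^2 := by ring
      rw [idB]
      have t1 : 0 ≤ (x^4+m*x^3+m^2*x^2+m^3*x+m^4)*((x^2+m^2) - 4*g*θ^2*x) :=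
        mul_nonneg hS4.le (by linarith)
      have t2 : 0 < m^2*x^2*(x^2+m^2) := by positivity
      have t3 : 0 < (r-m)*x*(x^2+m^2)^2 := by positivity
      linarith
    have hxm : m - x = 0 := by
      rcases mul_eq_zero.mp key with h | h
      · exact h
      · exact absurd h (ne_of_gt hBpos)
    have hxm' : x = m := by linarith
    have hu0 : u = 0 := by
      rw [hxm'] at hu'
      have : u * (2*m^2) = 0 := by linear_combination hu'
      rcases mul_eq_zero.mp this with h | h
      · exact h
      · nlinarith
    have hym : y = m := by
      have h6 : m * y = m * m := by
        rw [hxm'] at hPQu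
        linear_combination hPQu
      exact mul_left_cancel₀ (ne_of_gt hm) h6
    constructor
    · rw [hxm', hym] at hE3u; linarith
    · rw [hΩ, hu0]
  · -- dimorphic case
    left
    push_neg at hcase
    obtain ⟨v, hv, hvu⟩ := hcase
    have hpair0 : ∀ w1 ∈ Ω, ∀ w2 ∈ Ω, w1 ≠ w2 → w2 = -w1 := by
      intro w1 hw1 w2 hw2 hne12
      obtain ⟨hQ1, hD1, _, _⟩ := hroot w1 hw1
      obtain ⟨hQ2, hD2, _, _⟩ := hroot w2 hw2
      have key : ((w1-w2)^3*(w1+w2))*g^2 = 0 := by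
        linear_combination (-1 : ℝ)*hQ1 + hQ2 + ((w1-w2)*g)*hD1 + ((w1-w2)*g)*hD2
      have hg2 : (g:ℝ)^2 ≠ 0 := by positivity
      have h30 := (mul_eq_zero.mp key).resolve_right hg2
      have h3 : (w1-w2)^3 ≠ 0 := pow_ne_zero _ (sub_ne_zero.mpr hne12)
      have := (mul_eq_zero.mp h30).resolve_left h3
      linarith
    have hvu' : v = -u := hpair0 u hu v hv (Ne.symm hvu)
    have hu0 : u ≠ 0 := by
      intro h
      apply hvu
      rw [hvu', h, neg_zero]
    obtain ⟨hQu, hDu, _, _⟩ := hroot u hu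
    obtain ⟨hQv, hDv, _, _⟩ := hroot v hv
    rw [hvu'] at hQv hDv
    have hbb : 2*θ*(b2 - b1) = 0 := by linear_combination hDu + hDv
    have hb12 : b2 = b1 := by
      have h2θ : (2*θ) ≠ 0 := by positivity
      have := (mul_eq_zero.mp hbb).resolve_left h2θ
      linarith
    rw [hb12] at hQu hDu
    have h5 : u*(g*(u^2-θ^2)+b1) = 0 := by linear_combination (1/2)*hDu
    have hb1eq : g*(u^2-θ^2)+b1 = 0 := (mul_eq_zero.mp h5).resolve_left hu0
    have hm2 : 4*g^2*θ^2*(θ^2-u^2) = m^2 := by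
      linear_combination hQu - (4*g*θ^2 + (g*(u^2-θ^2)+b1))*hb1eq
    have hu2 : 0 < u^2 := by
      rcases hu0.lt_or_gt with h | h
      · nlinarith
      · nlinarith
    have hmlt : m < 2*g*θ^2 := by
      nlinarith [hm2, hm, mul_pos hg (pow_pos hθ 2),
        mul_pos (mul_pos (mul_pos hg hg) (pow_pos hθ 2)) hu2]
    have hu2eq : u^2 = θ^2 - m^2/(4*θ^2*g^2) := by
      field_simp
      linear_combination -hm2
    have hZu : Real.sqrt (θ^2 - m^2/(4*θ^2*g^2)) = |u| := by
      rw [← hu2eq]; exact Real.sqrt_sq_eq_abs u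
    have hΩ : Ω = ({-|u|, |u|} : Finset ℝ) := by
      apply Finset.ext
      intro w
      simp only [Finset.mem_insert, Finset.mem_singleton]
      constructor
      · intro hw
        by_cases hwu : w = u
        · subst hwu
          rcases le_or_gt 0 w with h | h
          · right; rw [abs_of_nonneg h]
          · left; rw [abs_of_neg h, neg_neg]
        · have hwv : w = -u := hpair0 u hu w hw (fun hh => hwu hh.symm)
          rcases le_or_gt 0 u with h | h
          · left; rw [abs_of_nonneg h, hwv]
          · right; rw [abs_of_neg h, hwv]
      · intro hw
        rcases le_or_gt 0 u with h | h
        · rcases hw with hw | hw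
          · rw [hw, abs_of_nonneg h, ← hvu']; exact hv
          · rw [hw, abs_of_nonneg h]; exact hu
        · rcases hw with hw | hw
          · rw [hw, abs_of_neg h, neg_neg]; exact hu
          · rw [hw, abs_of_neg h, ← hvu']; exact hv
    refine ⟨hmlt, ?_⟩
    rw [hΩ, hZu]


/-- The symmetric case: the unique ESS is dimorphic iff `m/(2g) < θ²`, and otherwise it is the
singleton `{0}`, with the indicated demographic equilibria. -/
theorem symmetric_ESS (θ r g κ m : ℝ)
    (hθ : 0 < θ) (hg : 0 < g) (hκ : 0 < κ) (hm : 0 < m)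
    (hrm : 0 < r - m) :
    ((∃ Ω : Finset ℝ, IsESS θ r r g g κ κ m m Ω ∧ Ω.card = 2) ↔ m / (2 * g) < θ ^ 2) ∧
    (m / (2 * g) < θ ^ 2 →
      (∀ Ω : Finset ℝ, IsESS θ r r g g κ κ m m Ω →
        Ω = ({-Real.sqrt (θ ^ 2 - m ^ 2 / (4 * θ ^ 2 * g ^ 2)),
              Real.sqrt (θ ^ 2 - m ^ 2 / (4 * θ ^ 2 * g ^ 2))} : Finset ℝ)) ∧
      IsESSWith θ r r g g κ κ m m
        ({-Real.sqrt (θ ^ 2 - m ^ 2 / (4 * θ ^ 2 * g ^ 2)),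
           Real.sqrt (θ ^ 2 - m ^ 2 / (4 * θ ^ 2 * g ^ 2))} : Finset ℝ)
        ((m ^ 2 / (4 * θ ^ 2 * g) + r - m) / κ) ((m ^ 2 / (4 * θ ^ 2 * g) + r - m) / κ)) ∧
    (θ ^ 2 ≤ m / (2 * g) →
      (∀ Ω : Finset ℝ, IsESS θ r r g g κ κ m m Ω → Ω = ({0} : Finset ℝ)) ∧
      IsESSWith θ r r g g κ κ m m ({0} : Finset ℝ)
        ((r - g * θ ^ 2) / κ) ((r - g * θ ^ 2) / κ)) := by
  have h2g : (0:ℝ) < 2*g := by positivity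
  have hc1 : m / (2*g) < θ^2 ↔ m < 2*g*θ^2 := by
    rw [div_lt_iff₀ h2g]
    constructor <;> intro h <;> nlinarith
  have hc2 : θ^2 ≤ m/(2*g) ↔ 2*g*θ^2 ≤ m := by
    rw [le_div_iff₀ h2g]
    constructor <;> intro h <;> nlinarith
  have harg : m < 2*g*θ^2 → 0 < θ^2 - m^2/(4*θ^2*g^2) := by
    intro hlt
    rw [sub_pos, div_lt_iff₀ (by positivity)]
    nlinarith
  refine ⟨?_, ?_, ?_⟩
  · constructor
    · rintro ⟨Ω, ⟨α1, α2, hW⟩, hcard⟩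
      rcases classify θ r g κ m hθ hg hκ hm hrm Ω α1 α2 hW with ⟨hlt, _⟩ | ⟨hge, hΩ⟩
      · exact hc1.mpr hlt
      · rw [hΩ] at hcard
        simp at hcard
    · intro h
      have hlt := hc1.mp h
      obtain ⟨α1, α2, hW, _, _⟩ := essDi θ r g κ m hθ hg hκ hm hrm hlt
      refine ⟨_, ⟨α1, α2, hW⟩, ?_⟩
      have hZ : 0 < Real.sqrt (θ^2 - m^2/(4*θ^2*g^2)) := Real.sqrt_pos.mpr (harg hlt)
      have hne : -Real.sqrt (θ^2 - m^2/(4*θ^2*g^2)) ≠ Real.sqrt (θ^2 - m^2/(4*θ^2*g^2)) := by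
        intro hh; nlinarith
      rw [Finset.card_insert_of_notMem (Finset.notMem_singleton.mpr hne),
        Finset.card_singleton]
  · intro h
    have hlt := hc1.mp h
    constructor
    · rintro Ω ⟨α1, α2, hW⟩
      rcases classify θ r g κ m hθ hg hκ hm hrm Ω α1 α2 hW with ⟨_, hΩ⟩ | ⟨hge, _⟩
      · exact hΩ
      · linarith
    · exact essDi θ r g κ m hθ hg hκ hm hrm hlt
  · intro h
    have hge := hc2.mp h
    constructor
    · rintro Ω ⟨α1, α2, hW⟩
      rcases classify θ r g κ m hθ hg hκ hm hrm Ω α1 α2 hW with ⟨hlt, _⟩ | ⟨_, hΩ⟩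
      · linarith
      · exact hΩ
    · exact essMono θ r g κ m hθ hg hκ hm hrm hge
end

section
/- Assume m_1 > 0, m_2 > 0, r_1 − m_1 > 0, r_2 − m_2 > 0 and m_1 m_2 < 4 g_1 g_2 θ^4. Let (N_1^{eq}, N_2^{eq}) be the unique pair of positive reals satisfying N_1^{eq}(R_1(−z^{D*}, N_1^{eq}) − m_1) + m_2 N_2^{eq} = 0 and m_1 N_1^{eq} + N_2^{eq}(R_2(−z^{D*}, N_2^{eq}) − m_2) = 0 (the demographic equilibrium of a monomorphic resident population of trait −z^{D*}). Then 0 < m_2 N_2^{D*} + (R_1(−z^{D*}, N_1^{D*}) − m_1) N_1^{D*} if and only if W(z^{D*}, N_1^{eq}, N_2^{eq}) > 0. Symmetrically, if (M_1^{eq}, M_2^{eq}) is the unique pair of positive reals satisfying M_1^{eq}(R_1(z^{D*}, M_1^{eq}) − m_1) + m_2 M_2^{eq} = 0 and m_1 M_1^{eq} + M_2^{eq}(R_2(z^{D*}, M_2^{eq}) − m_2) = 0, then 0 < m_1 N_1^{D*} + (R_2(z^{D*}, N_2^{D*}) − m_2) N_2^{D*} if and only if W(−z^{D*}, M_1^{eq},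 M_2^{eq}) > 0. -/
open Real Set Filter MeasureTheory

noncomputable def zD (θ r1 r2 g1 g2 κ1 κ2 m1 m2 : ℝ) : ℝ :=
  Real.sqrt (θ ^ 2 - m1 * m2 / (4 * θ ^ 2 * g1 * g2))

noncomputable def N1D (θ r1 r2 g1 g2 κ1 κ2 m1 m2 : ℝ) : ℝ :=
  (m1 * m2 / (4 * θ ^ 2 * g2) + r1 - m1) / κ1

noncomputable def N2D (θ r1 r2 g1 g2 κ1 κ2 m1 m2 : ℝ) : ℝ :=
  (m1 * m2 / (4 * θ ^ 2 * g1) + r2 - m2) / κ2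

/-- The quantity `m2 N2D + (R1(-zD, N1D) - m1) N1D` from condition (A2). -/
noncomputable def q2 (θ r1 r2 g1 g2 κ1 κ2 m1 m2 : ℝ) : ℝ :=
  m2 * N2D θ r1 r2 g1 g2 κ1 κ2 m1 m2 +
    (R1 θ r1 r2 g1 g2 κ1 κ2 m1 m2 (-(zD θ r1 r2 g1 g2 κ1 κ2 m1 m2)) (N1D θ r1 r2 g1 g2 κ1 κ2 m1 m2) - m1) * N1D θ r1 r2 g1 g2 κ1 κ2 m1 m2

/-- The quantity `m1 N1D + (R2(zD, N2D) - m2) N2D` from condition (A3). -/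
noncomputable def q3 (θ r1 r2 g1 g2 κ1 κ2 m1 m2 : ℝ) : ℝ :=
  m1 * N1D θ r1 r2 g1 g2 κ1 κ2 m1 m2 +
    (R2 θ r1 r2 g1 g2 κ1 κ2 m1 m2 (zD θ r1 r2 g1 g2 κ1 κ2 m1 m2) (N2D θ r1 r2 g1 g2 κ1 κ2 m1 m2) - m2) * N2D θ r1 r2 g1 g2 κ1 κ2 m1 m2

lemma wpos_iff (A B p : ℝ) (hp : 0 < p) :
    0 < (A + B + Real.sqrt ((A - B) ^ 2 + p)) / 2 ↔ 0 < A + B ∨ 4 * (A * B) < p := by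
  have hnn : (0:ℝ) ≤ (A - B) ^ 2 + p := by positivity
  have hs := Real.sq_sqrt hnn
  have hsnn := Real.sqrt_nonneg ((A - B) ^ 2 + p)
  constructor
  · intro h
    by_cases hab : 0 < A + B
    · exact Or.inl hab
    · push_neg at hab
      right
      have h' : -(A + B) < Real.sqrt ((A - B) ^ 2 + p) := by linarith
      nlinarith [h', hab, hs]
  · rintro (h | h)
    · linarith
    · by_contra hc
      push_neg at hc
      nlinarith [hs, hsnn, hc, h]

set_option maxHeartbeats 2000000 in
lemma key (m1 m2 a b κ1 κ2 c1 c2 D1 D2 u uP Aq Bq Wv Q : ℝ)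
    (hm1 : 0 < m1) (hm2 : 0 < m2) (ha : 0 < a) (hb : 0 < b)
    (hκ1 : 0 < κ1) (hκ2 : 0 < κ2) (hu : 0 < u) (hup : 0 < uP) (hD1 : 0 < D1)
    (h1 : c1 + uP = κ1 * D1)
    (h2 : uP * c2 + m1 * m2 = uP * (κ2 * D2))
    (hGu : κ2 * u ^ 2 * (c1 + u) = κ1 * m2 * (c2 * u + m1 * m2))
    (hA : Aq = -u - a)
    (hB : u * Bq = -(m1 * m2) + u * b)
    (hPid : b * (uP * (uP + a)) = a * (m1 * m2))
    (hQ : Q = m2 * D2 - uP * D1)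
    (hW : Wv = (Aq + Bq + Real.sqrt ((Aq - Bq) ^ 2 + 4 * (m1 * m2))) / 2) :
    (0 < Q ↔ 0 < Wv) := by
  have hGup : κ2 * uP ^ 2 * (c1 + uP) - κ1 * m2 * (c2 * uP + m1 * m2)
      = -(κ1 * (κ2 * (uP * (m2 * D2 - uP * D1)))) := by
    linear_combination (κ2 * uP ^ 2) * h1 - (κ1 * m2) * h2
  have hc1u : 0 < c1 + uP + u := by nlinarith [mul_pos hκ1 hD1]
  have hK : 0 < κ2 * (u * (uP * (c1 + uP + u))) + κ1 * (m1 * (m2 * m2)) := by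
    have t1 := mul_pos hκ2 (mul_pos hu (mul_pos hup hc1u))
    have t2 := mul_pos hκ1 (mul_pos hm1 (mul_pos hm2 hm2))
    linarith
  have hI : u * (κ1 * (κ2 * (uP * (m2 * D2 - uP * D1))))
      = (u - uP) * (κ2 * (u * (uP * (c1 + uP + u))) + κ1 * (m1 * (m2 * m2))) := by
    linear_combination u * hGup - uP * hGu
  have hQu : 0 < m2 * D2 - uP * D1 ↔ uP < u := by
    constructor
    · intro h
      have hpos : 0 < u * (κ1 * (κ2 * (uP * (m2 * D2 - uP * D1)))) :=
        mul_pos hu (mul_pos hκ1 (mul_pos hκ2 (mul_pos hup h)))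
      rw [hI] at hpos
      nlinarith [hK, hpos]
    · intro h
      have hpos : 0 < (u - uP) * (κ2 * (u * (uP * (c1 + uP + u))) + κ1 * (m1 * (m2 * m2))) :=
        mul_pos (by linarith) hK
      rw [← hI] at hpos
      have hP2 : 0 < u * (κ1 * (κ2 * uP)) := mul_pos hu (mul_pos hκ1 (mul_pos hκ2 hup))
      nlinarith [hpos, hP2]
  have hI2 : u * (Aq * Bq - m1 * m2) = -(b * ((u - uP) * (u + uP + a))) := by
    linear_combination Aq * hB + (-(m1 * m2) + u * b) * hA - hPid
  have hsum : 0 < u + uP + a := by linarith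
  have hABu : Aq * Bq < m1 * m2 ↔ uP < u := by
    constructor
    · intro h
      have h0 : 0 < b * ((u - uP) * (u + uP + a)) := by
        nlinarith [mul_pos hu (sub_pos.mpr h)]
      nlinarith [h0, mul_pos hb hsum]
    · intro h
      have h0 : 0 < u * (m1 * m2 - Aq * Bq) := by
        nlinarith [mul_pos (mul_pos hb (sub_pos.mpr h)) hsum]
      nlinarith [h0, hu]
  have hAneg : Aq < 0 := by rw [hA]; linarith
  rw [hQ, hQu, hW, wpos_iff Aq Bq (4 * (m1 * m2)) (by positivity), ← hABu]
  constructor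
  · intro h; right; linarith
  · rintro (h | h)
    · nlinarith [mul_pos hm1 hm2]
    · linarith

set_option maxHeartbeats 2000000 in
/-- Interpretation of conditions (A2) and (A3) as invasion conditions: (A2) holds iff a mutant
trait `zD` can invade the resident population `-zD` at its demographic equilibrium, and
symmetrically for (A3). -/
theorem invasion_conditions (θ r1 r2 g1 g2 κ1 κ2 m1 m2 : ℝ)
    (hθ : 0 < θ) (hg1 : 0 < g1) (hg2 : 0 < g2) (hκ1 : 0 < κ1) (hκ2 : 0 < κ2)
    (hm1 : 0 < m1) (hm2 : 0 < m2)
    (hr1 : 0 < r1 - m1) (hr2 : 0 < r2 - m2)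
    (hA1 : m1 * m2 < 4 * g1 * g2 * θ ^ 4)
    (N1eq N2eq : ℝ) (hN1 : 0 < N1eq) (hN2 : 0 < N2eq)
    (heqN1 : N1eq * (R1 θ r1 r2 g1 g2 κ1 κ2 m1 m2 (-(zD θ r1 r2 g1 g2 κ1 κ2 m1 m2)) N1eq - m1) + m2 * N2eq = 0)
    (heqN2 : m1 * N1eq + N2eq * (R2 θ r1 r2 g1 g2 κ1 κ2 m1 m2 (-(zD θ r1 r2 g1 g2 κ1 κ2 m1 m2)) N2eq - m2) = 0)
    (M1eq M2eq : ℝ) (hM1 : 0 < M1eq) (hM2 : 0 < M2eq)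
    (heqM1 : M1eq * (R1 θ r1 r2 g1 g2 κ1 κ2 m1 m2 (zD θ r1 r2 g1 g2 κ1 κ2 m1 m2) M1eq - m1) + m2 * M2eq = 0)
    (heqM2 : m1 * M1eq + M2eq * (R2 θ r1 r2 g1 g2 κ1 κ2 m1 m2 (zD θ r1 r2 g1 g2 κ1 κ2 m1 m2) M2eq - m2) = 0) :
    (0 < q2 θ r1 r2 g1 g2 κ1 κ2 m1 m2 ↔ 0 < W θ r1 r2 g1 g2 κ1 κ2 m1 m2 (zD θ r1 r2 g1 g2 κ1 κ2 m1 m2) N1eq N2eq) ∧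
    (0 < q3 θ r1 r2 g1 g2 κ1 κ2 m1 m2 ↔ 0 < W θ r1 r2 g1 g2 κ1 κ2 m1 m2 (-(zD θ r1 r2 g1 g2 κ1 κ2 m1 m2)) M1eq M2eq) := by
  set s := zD θ r1 r2 g1 g2 κ1 κ2 m1 m2 with hsdef
  have harg : 0 < θ ^ 2 - m1 * m2 / (4 * θ ^ 2 * g1 * g2) := by
    rw [sub_pos, div_lt_iff₀ (by positivity)]
    nlinarith
  have hs2 : s ^ 2 = θ ^ 2 - m1 * m2 / (4 * θ ^ 2 * g1 * g2) := by
    rw [hsdef, zD]; exact Real.sq_sqrt harg.le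
  have hspos : 0 < s := by rw [hsdef, zD]; exact Real.sqrt_pos.mpr harg
  have hsθ : s < θ := by nlinarith [hs2, hspos, div_pos (mul_pos hm1 hm2) (by positivity : (0:ℝ) < 4 * θ ^ 2 * g1 * g2)]
  have hc : 4 * g1 * g2 * θ ^ 2 * (θ ^ 2 - s ^ 2) = m1 * m2 := by
    rw [hs2]; field_simp; ring
  have hg1c : m1 * m2 / (4 * θ ^ 2 * g2) = g1 * (θ ^ 2 - s ^ 2) := by
    rw [← hc]; field_simp
  have hg2c : m1 * m2 / (4 * θ ^ 2 * g1) = g2 * (θ ^ 2 - s ^ 2) := by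
    rw [← hc]; field_simp
  simp only [R1, R2] at heqN1 heqN2 heqM1 heqM2
  have hD1 : 0 < N1D θ r1 r2 g1 g2 κ1 κ2 m1 m2 := by
    simp only [N1D]
    apply div_pos _ hκ1
    have : 0 < m1 * m2 / (4 * θ ^ 2 * g2) := by positivity
    linarith
  have hD2 : 0 < N2D θ r1 r2 g1 g2 κ1 κ2 m1 m2 := by
    simp only [N2D]
    apply div_pos _ hκ2
    have : 0 < m1 * m2 / (4 * θ ^ 2 * g1) := by positivity
    linarith
  constructor
  · -- Part 1
    obtain ⟨u, hu, huN, hk1N, hB0u⟩ :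
        ∃ u, 0 < u ∧ N1eq * u = m2 * N2eq ∧
          (r1 - m1 - g1 * (θ - s) ^ 2) + u = κ1 * N1eq ∧
          (r2 - m2 - g2 * (θ + s) ^ 2) * u + m1 * m2 = u * (κ2 * N2eq) := by
      refine ⟨m2 * N2eq / N1eq, div_pos (mul_pos hm2 hN2) hN1, by field_simp, ?_, ?_⟩
      · field_simp
        linear_combination heqN1
      · field_simp
        linear_combination heqN2
    have hh1 : (r1 - m1 - g1 * (θ - s) ^ 2) + 2 * g1 * θ * (θ - s)
        = κ1 * N1D θ r1 r2 g1 g2 κ1 κ2 m1 m2 := by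
      simp only [N1D, hg1c]
      field_simp
      ring
    have hh2 : 2 * g1 * θ * (θ - s) * (r2 - m2 - g2 * (θ + s) ^ 2) + m1 * m2
        = 2 * g1 * θ * (θ - s) * (κ2 * N2D θ r1 r2 g1 g2 κ1 κ2 m1 m2) := by
      simp only [N2D, hg2c]
      rw [show κ2 * ((g2 * (θ ^ 2 - s ^ 2) + r2 - m2) / κ2) = g2 * (θ ^ 2 - s ^ 2) + r2 - m2
        by field_simp]
      linear_combination -hc
    refine key m1 m2 (4 * g1 * θ * s) (4 * g2 * θ * s) κ1 κ2
      (r1 - m1 - g1 * (θ - s) ^ 2) (r2 - m2 - g2 * (θ + s) ^ 2)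
      (N1D θ r1 r2 g1 g2 κ1 κ2 m1 m2) (N2D θ r1 r2 g1 g2 κ1 κ2 m1 m2)
      u (2 * g1 * θ * (θ - s))
      (R1 θ r1 r2 g1 g2 κ1 κ2 m1 m2 s N1eq - m1)
      (R2 θ r1 r2 g1 g2 κ1 κ2 m1 m2 s N2eq - m2)
      _ _ hm1 hm2 (by positivity) (by positivity) hκ1 hκ2 hu
      (mul_pos (mul_pos (mul_pos two_pos hg1) hθ) (by linarith)) hD1 hh1 hh2 ?_ ?_ ?_ ?_ ?_ ?_
    · -- hGu
      linear_combination (κ2 * u ^ 2) * hk1N + (κ1 * κ2 * u) * huN - (κ1 * m2) * hB0u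
    · -- hA
      simp only [R1]
      linear_combination hk1N
    · -- hB
      simp only [R2]
      linear_combination hB0u
    · -- hPid
      linear_combination (4 * g1 * θ * s) * hc
    · -- hQ
      simp only [q2, R1]
      rw [← hsdef]
      linear_combination (N1D θ r1 r2 g1 g2 κ1 κ2 m1 m2) * hh1
    · -- hW
      simp only [W, R1, R2]
      ring_nf
  · -- Part 2
    obtain ⟨v, hv, hvM, hk2M, hA0v⟩ :
        ∃ v, 0 < v ∧ M2eq * v = m1 * M1eq ∧
          (r2 - m2 - g2 * (θ - s) ^ 2) + v = κ2 * M2eq ∧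
          (r1 - m1 - g1 * (θ + s) ^ 2) * v + m2 * m1 = v * (κ1 * M1eq) := by
      refine ⟨m1 * M1eq / M2eq, div_pos (mul_pos hm1 hM1) hM2, by field_simp, ?_, ?_⟩
      · field_simp
        linear_combination heqM2
      · field_simp
        linear_combination heqM1
    have hh1 : (r2 - m2 - g2 * (θ - s) ^ 2) + 2 * g2 * θ * (θ - s)
        = κ2 * N2D θ r1 r2 g1 g2 κ1 κ2 m1 m2 := by
      simp only [N2D, hg2c]
      field_simp
      ring
    have hh2 : 2 * g2 * θ * (θ - s) * (r1 - m1 - g1 * (θ + s) ^ 2) + m2 * m1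
        = 2 * g2 * θ * (θ - s) * (κ1 * N1D θ r1 r2 g1 g2 κ1 κ2 m1 m2) := by
      simp only [N1D, hg1c]
      rw [show κ1 * ((g1 * (θ ^ 2 - s ^ 2) + r1 - m1) / κ1) = g1 * (θ ^ 2 - s ^ 2) + r1 - m1
        by field_simp]
      linear_combination -hc
    refine key m2 m1 (4 * g2 * θ * s) (4 * g1 * θ * s) κ2 κ1
      (r2 - m2 - g2 * (θ - s) ^ 2) (r1 - m1 - g1 * (θ + s) ^ 2)
      (N2D θ r1 r2 g1 g2 κ1 κ2 m1 m2) (N1D θ r1 r2 g1 g2 κ1 κ2 m1 m2)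
      v (2 * g2 * θ * (θ - s))
      (R2 θ r1 r2 g1 g2 κ1 κ2 m1 m2 (-s) M2eq - m2)
      (R1 θ r1 r2 g1 g2 κ1 κ2 m1 m2 (-s) M1eq - m1)
      _ _ hm2 hm1 (by positivity) (by positivity) hκ2 hκ1 hv
      (mul_pos (mul_pos (mul_pos two_pos hg2) hθ) (by linarith)) hD2 hh1 hh2 ?_ ?_ ?_ ?_ ?_ ?_
    · -- hGu
      linear_combination (κ1 * v ^ 2) * hk2M + (κ2 * κ1 * v) * hvM - (κ2 * m1) * hA0v
    · -- hA
      simp only [R2]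
      linear_combination hk2M
    · -- hB
      simp only [R1]
      linear_combination hA0v
    · -- hPid
      linear_combination (4 * g2 * θ * s) * hc
    · -- hQ
      simp only [q3, R2]
      rw [← hsdef]
      linear_combination (N2D θ r1 r2 g1 g2 κ1 κ2 m1 m2) * hh1
    · -- hW
      simp only [W, R1, R2]
      ring_nf
end

section
/- Let θ > 0 and μ_1, μ_2 ∈ ℝ, and set f(z; μ_1, μ_2) = (μ_1 + (z+θ)^2)(μ_2 + (z−θ)^2). If the function z ↦ f(z; μ_1, μ_2) has two distinct global minimum points z_I and z_II on ℝ, then μ_1 = μ_2 and z_I = −z_II. -/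
open Real Set Filter MeasureTheory

lemma deriv_zero_aux (a b c : ℝ) (h : ∀ t : ℝ, 0 ≤ a*t + b*t^2 + c*t^3 + t^4) : a = 0 := by
  by_contra ha
  have ha2 : 0 < a^2 := by positivity
  set D : ℝ := 1 + |b| + |c*a| + a^2 with hDdef
  have hD : 0 < D := by positivity
  have hD1 : 1 ≤ D := by
    have : 0 ≤ |b| + |c*a| + a^2 := by positivity
    linarith
  set δ : ℝ := 1/D with hδdef
  have hδpos : 0 < δ := by positivity
  have hδ1 : δ ≤ 1 := by
    rw [hδdef, div_le_one hD]; exact hD1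
  have h1 := h (-a*δ)
  have hbb : b*δ ≤ |b| * δ := by
    have := le_abs_self b
    nlinarith
  have hcc : -(c*a)*δ^2 ≤ |c*a| * δ^2 := by
    have := neg_abs_le (c*a)
    nlinarith [sq_nonneg δ]
  have haa : a^2*δ^3 ≤ a^2*δ^2 := by nlinarith
  have haa2 : a^2*δ^2 ≤ a^2*δ := by nlinarith
  have hsum : b*δ - (c*a)*δ^2 + a^2*δ^3 ≤ (|b| + |c*a| + a^2) * δ := by
    have h2 : |c*a| * δ^2 ≤ |c*a| * δ := by
      have := abs_nonneg (c*a); nlinarith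
    linarith
  have hDδ : D * δ = 1 := by
    rw [hδdef]; field_simp
  have hlt : (|b| + |c*a| + a^2) * δ < 1 := by
    nlinarith
  have hbr : b*δ - (c*a)*δ^2 + a^2*δ^3 - 1 < 0 := by linarith
  nlinarith [mul_pos (mul_pos ha2 hδpos) (show (0:ℝ) < 1 - (b*δ - (c*a)*δ^2 + a^2*δ^3) by linarith)]

/-- If `z ↦ (μ1 + (z+θ)²)(μ2 + (z-θ)²)` has two distinct global minimum points, then
`μ1 = μ2` and the two minima are symmetric. -/
theorem two_global_minima (θ μ1 μ2 : ℝ) (hθ : 0 < θ) (zI zII : ℝ) (hne : zI ≠ zII)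
    (hI : ∀ z : ℝ, (μ1 + (zI + θ) ^ 2) * (μ2 + (zI - θ) ^ 2) ≤
      (μ1 + (z + θ) ^ 2) * (μ2 + (z - θ) ^ 2))
    (hII : ∀ z : ℝ, (μ1 + (zII + θ) ^ 2) * (μ2 + (zII - θ) ^ 2) ≤
      (μ1 + (z + θ) ^ 2) * (μ2 + (z - θ) ^ 2)) :
    μ1 = μ2 ∧ zI = -zII := by
  -- derivative vanishes at zI and zII
  have hAI : 4*zI^3 + 2*(μ1 + μ2 - 2*θ^2)*zI + 2*θ*(μ2 - μ1) = 0 := by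
    apply deriv_zero_aux _ (6*zI^2 + (μ1 + μ2 - 2*θ^2)) (4*zI)
    intro t
    have := hI (zI + t)
    nlinarith [this]
  have hAII : 4*zII^3 + 2*(μ1 + μ2 - 2*θ^2)*zII + 2*θ*(μ2 - μ1) = 0 := by
    apply deriv_zero_aux _ (6*zII^2 + (μ1 + μ2 - 2*θ^2)) (4*zII)
    intro t
    have := hII (zII + t)
    nlinarith [this]
  -- equal values
  have hEq : zI^4 + (μ1 + μ2 - 2*θ^2)*zI^2 + 2*θ*(μ2 - μ1)*zI
      = zII^4 + (μ1 + μ2 - 2*θ^2)*zII^2 + 2*θ*(μ2 - μ1)*zII := by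
    have h1 := hI zII
    have h2 := hII zI
    nlinarith [h1, h2]
  have hd : zI - zII ≠ 0 := sub_ne_zero.mpr hne
  have hE : 4*(zI^2 + zI*zII + zII^2) + 2*(μ1 + μ2 - 2*θ^2) = 0 := by
    have h : (zI - zII) * (4*(zI^2 + zI*zII + zII^2) + 2*(μ1 + μ2 - 2*θ^2)) = 0 := by
      linear_combination hAI - hAII
    rcases mul_eq_zero.mp h with h | h
    · exact absurd h hd
    · exact h
  have hG : 2*θ*(μ2 - μ1) = (zI + zII)^3 := by
    have h : (zI - zII) * (2*θ*(μ2 - μ1) - (zI + zII)^3) = 0 := by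
      linear_combination hEq - ((zI - zII)*(zI + zII)/2) * hE
    rcases mul_eq_zero.mp h with h | h
    · exact absurd h hd
    · linarith [h]
  have hs : zI + zII = 0 := by
    have h : (zI + zII) * (zI - zII)^2 = 0 := by
      linear_combination (1/2) * hAI + (1/2) * hAII - ((zI + zII)/2) * hE - hG
    rcases mul_eq_zero.mp h with h | h
    · exact h
    · exact absurd h (pow_ne_zero 2 hd)
  have hQ0 : 2*θ*(μ2 - μ1) = 0 := by rw [hG, hs]; ring
  refine ⟨?_, by linarith⟩
  have hθ' : (2*θ) ≠ 0 := by positivity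
  rcases mul_eq_zero.mp hQ0 with h | h
  · exact absurd h hθ'
  · linarith
end

section
/- Assume θ > 0, g_1, g_2, κ_1, κ_2 > 0, m_1, m_2 > 0, r_1 − m_1 > 0, and m_1 m_2 ≥ 4 g_1 g_2 θ^4. Then: (i) for every μ_2 > 0 there exist a unique μ_1 ∈ (0,∞) and a unique point z̄ ∈ [−θ, θ] such that z̄ is the unique global minimum point of z ↦ f(z; μ_1, μ_2) and min_{z∈ℝ} f(z; μ_1, μ_2) = f(z̄; μ_1, μ_2) = m_1 m_2/(g_1 g_2); denote F_1(μ_2) = μ_1 and F_2(μ_2) = z̄; (ii) F_1 and F_2 are strictly decreasing on (0,∞); (iii) the function G(μ_1, z̄) = (1/g_2)[(κ_2 g_1/m_2)((z̄ + θ)^2 + μ_1)((g_1 μ_1 + r_1 − m_1)/κ_1) + m_2 − r_2] is increasing in μ_1 and in z̄ on (0,∞) × [−θ, θ]. -/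
open Real Set Filter MeasureTheory

noncomputable def fmin (θ μ1 μ2 z : ℝ) : ℝ := (μ1 + (z + θ) ^ 2) * (μ2 + (z - θ) ^ 2)

noncomputable def Gfun (θ r1 r2 g1 g2 κ1 κ2 m1 m2 μ1 zb : ℝ) : ℝ :=
  (1 / g2) * ((κ2 * g1 / m2) * ((zb + θ) ^ 2 + μ1) * ((g1 * μ1 + r1 - m1) / κ1) + m2 - r2)

lemma hasDerivAt_fmin (θ μ1 μ2 z : ℝ) :
    HasDerivAt (fun z => fmin θ μ1 μ2 z)
      (2 * (2 * z ^ 3 + (μ1 + μ2 - 2 * θ ^ 2) * z + θ * (μ2 - μ1))) z := by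
  have h1 : HasDerivAt (fun z : ℝ => μ1 + (z + θ) ^ 2) (2 * (z + θ)) z := by
    have h := (((hasDerivAt_id z).add_const θ).pow 2).const_add μ1
    simpa using h
  have h2 : HasDerivAt (fun z : ℝ => μ2 + (z - θ) ^ 2) (2 * (z - θ)) z := by
    have h := (((hasDerivAt_id z).sub_const θ).pow 2).const_add μ2
    simpa using h
  have h := h1.mul h2
  rw [show 2 * (2 * z ^ 3 + (μ1 + μ2 - 2 * θ ^ 2) * z + θ * (μ2 - μ1)) =
      2 * (z + θ) * (μ2 + (z - θ) ^ 2) + (μ1 + (z + θ) ^ 2) * (2 * (z - θ)) by ring]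
  exact h

lemma continuous_fmin (θ μ1 μ2 : ℝ) : Continuous (fun z => fmin θ μ1 μ2 z) := by
  simp only [fmin]; fun_prop

lemma sumge (θ μ1 μ2 zb : ℝ) (hθ : 0 < θ) (hμ1 : 0 < μ1) (hμ2 : 0 < μ2)
    (h4 : 4 * θ ^ 4 ≤ fmin θ μ1 μ2 zb) (hle : fmin θ μ1 μ2 zb ≤ fmin θ μ1 μ2 0) :
    2 * θ ^ 2 ≤ μ1 + μ2 := by
  simp only [fmin] at h4 hle
  nlinarith [sq_nonneg (μ1 - μ2), sq_nonneg (μ1 + μ2 - 2 * θ ^ 2), sq_nonneg θ, mul_pos hμ1 hμ2, sq_nonneg (μ1 + μ2)]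

lemma unimodal (θ μ1 μ2 : ℝ) (hθ : 0 < θ) (hμ1 : 0 < μ1) (hμ2 : 0 < μ2)
    (hsum : 2 * θ ^ 2 ≤ μ1 + μ2) :
    ∃ z0 ∈ Set.Ioo (-θ) θ, ∀ z : ℝ, z ≠ z0 → fmin θ μ1 μ2 z0 < fmin θ μ1 μ2 z := by
  set g : ℝ → ℝ := fun z => 2 * z ^ 3 + (μ1 + μ2 - 2 * θ ^ 2) * z + θ * (μ2 - μ1) with hg
  have hgc : Continuous g := by fun_prop
  have hmono : StrictMono g := by
    intro x y hxy
    simp only [hg]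
    nlinarith [sq_nonneg (x + y), sq_nonneg (x - y), sq_nonneg x, sq_nonneg y,
      mul_pos (sub_pos.2 hxy) (sub_pos.2 hxy)]
  have hga : g (-θ) < 0 := by simp only [hg]; nlinarith [mul_pos hθ hμ1]
  have hgb : 0 < g θ := by simp only [hg]; nlinarith [mul_pos hθ hμ2]
  have hsub := intermediate_value_Ioo (by linarith : -θ ≤ θ) hgc.continuousOn
  obtain ⟨z0, hz0mem, hz0⟩ := hsub ⟨hga, hgb⟩
  refine ⟨z0, hz0mem, ?_⟩
  have hup : StrictMonoOn (fun z => fmin θ μ1 μ2 z) (Ici z0) := by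
    apply strictMonoOn_of_deriv_pos (convex_Ici _) (continuous_fmin θ μ1 μ2).continuousOn
    intro x hx
    rw [interior_Ici] at hx
    rw [(hasDerivAt_fmin θ μ1 μ2 x).deriv]
    have := hmono (show z0 < x from hx)
    rw [hz0] at this
    simp only [hg] at this
    linarith
  have hdown : StrictAntiOn (fun z => fmin θ μ1 μ2 z) (Iic z0) := by
    apply strictAntiOn_of_deriv_neg (convex_Iic _) (continuous_fmin θ μ1 μ2).continuousOn
    intro x hx
    rw [interior_Iic] at hx
    rw [(hasDerivAt_fmin θ μ1 μ2 x).deriv]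
    have := hmono (show x < z0 from hx)
    rw [hz0] at this
    simp only [hg] at this
    linarith
  intro z hz
  rcases lt_trichotomy z z0 with h | h | h
  · exact hdown h.le (le_refl z0) h
  · exact absurd h hz
  · exact hup (le_refl z0) h.le h

lemma root_of_min (θ μ1 μ2 z0 : ℝ)
    (hmin : ∀ z : ℝ, z ≠ z0 → fmin θ μ1 μ2 z0 < fmin θ μ1 μ2 z) :
    2 * z0 ^ 3 + (μ1 + μ2 - 2 * θ ^ 2) * z0 + θ * (μ2 - μ1) = 0 := by
  have hglob : ∀ z : ℝ, fmin θ μ1 μ2 z0 ≤ fmin θ μ1 μ2 z := fun z => by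
    by_cases h : z = z0
    · rw [h]
    · exact (hmin z h).le
  have hloc : IsLocalMin (fun z => fmin θ μ1 μ2 z) z0 := Filter.Eventually.of_forall hglob
  have := hloc.hasDerivAt_eq_zero (hasDerivAt_fmin θ μ1 μ2 z0)
  linarith

lemma key_s7 (θ μ2 C : ℝ) (hθ : 0 < θ) (hμ2 : 0 < μ2) (hC0 : 0 < C) (hC4 : 4 * θ ^ 4 ≤ C) :
    ∃ t z0 : ℝ, 0 < t ∧ z0 ∈ Set.Ioo (-θ) θ ∧
      (∀ z : ℝ, z ≠ z0 → fmin θ t μ2 z0 < fmin θ t μ2 z) ∧ fmin θ t μ2 z0 = C ∧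
      2 * θ ^ 2 ≤ t + μ2 ∧
      (∀ s zb : ℝ, 0 < s → zb ∈ Set.Icc (-θ) θ →
        (∀ z : ℝ, fmin θ s μ2 zb ≤ fmin θ s μ2 z) → fmin θ s μ2 zb = C → s = t ∧ zb = z0) := by
  have h0K : (0:ℝ) ∈ Icc (-θ) θ := ⟨by linarith, by linarith⟩
  have hmK : (-θ) ∈ Icc (-θ) θ := ⟨le_refl _, by linarith⟩
  have hmin : ∀ t : ℝ, ∃ zt ∈ Icc (-θ) θ, ∀ z ∈ Icc (-θ) θ, fmin θ t μ2 zt ≤ fmin θ t μ2 z :=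
    fun t => by
      obtain ⟨x, hx, hmin⟩ := isCompact_Icc.exists_isMinOn ⟨0, h0K⟩
        (continuous_fmin θ t μ2).continuousOn
      exact ⟨x, hx, fun z hz => hmin hz⟩
  choose zm hzmK hzmle using hmin
  set M : ℝ → ℝ := fun t => fmin θ t μ2 (zm t) with hM
  have hMmono : ∀ s t : ℝ, s < t → M s < M t := by
    intro s t hst
    have h1 : M s ≤ fmin θ s μ2 (zm t) := hzmle s (zm t) (hzmK t)
    have h2 : fmin θ s μ2 (zm t) < fmin θ t μ2 (zm t) := by
      simp only [fmin]
      nlinarith [sq_nonneg (zm t - θ), mul_pos (sub_pos.2 hst)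
        (by positivity : (0:ℝ) < μ2 + (zm t - θ) ^ 2)]
    simpa [hM] using h1.trans_lt h2
  have hsq : ∀ t : ℝ, (zm t - θ) ^ 2 ≤ 4 * θ ^ 2 := by
    intro t
    nlinarith [(hzmK t).1, (hzmK t).2]
  have hlip : ∀ s t : ℝ, M s ≤ M t + |s - t| * (μ2 + 4 * θ ^ 2) := by
    intro s t
    have h1 : M s ≤ fmin θ s μ2 (zm t) := hzmle s (zm t) (hzmK t)
    have h2 : fmin θ s μ2 (zm t) = fmin θ t μ2 (zm t) + (s - t) * (μ2 + (zm t - θ) ^ 2) := by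
      simp only [fmin]; ring
    have h3 : (s - t) * (μ2 + (zm t - θ) ^ 2) ≤ |s - t| * (μ2 + 4 * θ ^ 2) := by
      calc (s - t) * (μ2 + (zm t - θ) ^ 2) ≤ |s - t| * (μ2 + (zm t - θ) ^ 2) :=
            mul_le_mul_of_nonneg_right (le_abs_self _) (by positivity)
        _ ≤ |s - t| * (μ2 + 4 * θ ^ 2) :=
            mul_le_mul_of_nonneg_left (by linarith [hsq t]) (abs_nonneg _)
    linarith [h1, h2 ▸ h1]
  have hMcont : Continuous M := by
    have hK0 : (0:ℝ) ≤ μ2 + 4 * θ ^ 2 := by positivity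
    apply LipschitzWith.continuous (K := Real.toNNReal (μ2 + 4 * θ ^ 2))
    apply LipschitzWith.of_dist_le_mul
    intro x y
    rw [Real.dist_eq, Real.dist_eq, Real.coe_toNNReal _ hK0]
    rw [abs_sub_le_iff]
    constructor
    · have := hlip x y; linarith [mul_le_mul_of_nonneg_right (le_refl |x - y|) hK0]
    · have := hlip y x; rw [abs_sub_comm] at this; linarith
  have hM0 : M 0 = 0 := by
    have h1 : M 0 ≤ 0 := by
      have := hzmle 0 (-θ) hmK
      simpa [hM, fmin] using this
    have h2 : 0 ≤ M 0 := by
      simp only [hM, fmin]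
      positivity
    linarith
  set T : ℝ := C / μ2 with hT
  have hT0 : 0 < T := by positivity
  have hMT : C ≤ M T := by
    have : T * μ2 = C := div_mul_cancel₀ _ (ne_of_gt hμ2)
    have h2 : T * μ2 ≤ fmin θ T μ2 (zm T) := by
      simp only [fmin]
      nlinarith [sq_nonneg (zm T + θ), sq_nonneg (zm T - θ)]
    simpa [hM, this] using h2
  obtain ⟨t, htmem, hMt⟩ := intermediate_value_Icc hT0.le hMcont.continuousOn
    (by rw [hM0]; exact ⟨hC0.le, hMT⟩ : C ∈ Icc (M 0) (M T))
  have ht0 : 0 < t := by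
    rcases htmem.1.lt_or_eq with h | h
    · exact h
    · exfalso; rw [← h] at hMt; rw [hM0] at hMt; linarith
  have h4 : 4 * θ ^ 4 ≤ fmin θ t μ2 (zm t) := by
    rw [show fmin θ t μ2 (zm t) = C from hMt]; exact hC4
  have hsum : 2 * θ ^ 2 ≤ t + μ2 :=
    sumge θ t μ2 (zm t) hθ ht0 hμ2 h4 (hzmle t 0 h0K)
  obtain ⟨z0, hz0mem, hz0strict⟩ := unimodal θ t μ2 hθ ht0 hμ2 hsum
  have hglobal : ∀ z : ℝ, fmin θ t μ2 z0 ≤ fmin θ t μ2 z := by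
    intro z
    by_cases h : z = z0
    · rw [h]
    · exact (hz0strict z h).le
  have hval : fmin θ t μ2 z0 = C := by
    refine le_antisymm ?_ ?_
    · calc fmin θ t μ2 z0 ≤ fmin θ t μ2 (zm t) := hglobal (zm t)
        _ = C := hMt
    · calc C = fmin θ t μ2 (zm t) := hMt.symm
        _ ≤ fmin θ t μ2 z0 := hzmle t z0 ⟨hz0mem.1.le, hz0mem.2.le⟩
  refine ⟨t, z0, ht0, hz0mem, hz0strict, hval, hsum, ?_⟩
  intro s zb hs hzbK hzb hzbC
  have hMs : M s = C := by
    refine le_antisymm ?_ ?_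
    · calc M s ≤ fmin θ s μ2 zb := hzmle s zb hzbK
        _ = C := hzbC
    · calc C = fmin θ s μ2 zb := hzbC.symm
        _ ≤ fmin θ s μ2 (zm s) := hzb (zm s)
  have hst : s = t := by
    rcases lt_trichotomy s t with h | h | h
    · exfalso; have := hMmono s t h; rw [hMs, hMt] at this; linarith
    · exact h
    · exfalso; have := hMmono t s h; rw [hMs, hMt] at this; linarith
  subst hst
  refine ⟨rfl, ?_⟩
  by_contra h
  have h1 := hz0strict zb h
  rw [hzbC, ← hval] at h1
  linarith

/-- When `m1 m2 ≥ 4 g1 g2 θ⁴`: existence, uniqueness and monotonicity of the maps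
`F = (F1, F2)` and monotonicity of `G`. -/
theorem F_and_G_monotone (θ r1 r2 g1 g2 κ1 κ2 m1 m2 : ℝ)
    (hθ : 0 < θ) (hg1 : 0 < g1) (hg2 : 0 < g2) (hκ1 : 0 < κ1) (hκ2 : 0 < κ2)
    (hm1 : 0 < m1) (hm2 : 0 < m2)
    (hr1 : 0 < r1 - m1)
    (hA1' : 4 * g1 * g2 * θ ^ 4 ≤ m1 * m2) :
    ∃ F1 F2 : ℝ → ℝ,
      (∀ μ2 : ℝ, 0 < μ2 → ((0 < F1 μ2 ∧ F2 μ2 ∈ Set.Icc (-θ) θ ∧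
        (∀ z : ℝ, fmin θ (F1 μ2) μ2 (F2 μ2) ≤ fmin θ (F1 μ2) μ2 z) ∧
        (∀ z : ℝ, fmin θ (F1 μ2) μ2 z = fmin θ (F1 μ2) μ2 (F2 μ2) → z = F2 μ2) ∧
        fmin θ (F1 μ2) μ2 (F2 μ2) = m1 * m2 / (g1 * g2)) ∧
       (∀ μ1 zb : ℝ, 0 < μ1 → zb ∈ Set.Icc (-θ) θ →
          (∀ z : ℝ, fmin θ μ1 μ2 zb ≤ fmin θ μ1 μ2 z) →
          (∀ z : ℝ, fmin θ μ1 μ2 z = fmin θ μ1 μ2 zb → z = zb) →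
          fmin θ μ1 μ2 zb = m1 * m2 / (g1 * g2) →
          μ1 = F1 μ2 ∧ zb = F2 μ2))) ∧
      StrictAntiOn F1 (Set.Ioi 0) ∧ StrictAntiOn F2 (Set.Ioi 0) ∧
      (∀ zb ∈ Set.Icc (-θ) θ,
        StrictMonoOn (fun μ1 => Gfun θ r1 r2 g1 g2 κ1 κ2 m1 m2 μ1 zb) (Set.Ioi 0)) ∧
      (∀ μ1 ∈ Set.Ioi (0 : ℝ),
        StrictMonoOn (fun zb => Gfun θ r1 r2 g1 g2 κ1 κ2 m1 m2 μ1 zb) (Set.Icc (-θ) θ)) := by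
  set C : ℝ := m1 * m2 / (g1 * g2) with hC
  have hC0 : 0 < C := by positivity
  have hC4 : 4 * θ ^ 4 ≤ C := by
    rw [hC, le_div_iff₀ (by positivity : (0:ℝ) < g1 * g2)]
    nlinarith
  have key' : ∀ μ2 : ℝ, ∃ t z0 : ℝ, 0 < μ2 →
      (0 < t ∧ z0 ∈ Set.Ioo (-θ) θ ∧
      (∀ z : ℝ, z ≠ z0 → fmin θ t μ2 z0 < fmin θ t μ2 z) ∧ fmin θ t μ2 z0 = C ∧
      2 * θ ^ 2 ≤ t + μ2 ∧
      (∀ s zb : ℝ, 0 < s → zb ∈ Set.Icc (-θ) θ →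
        (∀ z : ℝ, fmin θ s μ2 zb ≤ fmin θ s μ2 z) → fmin θ s μ2 zb = C → s = t ∧ zb = z0)) := by
    intro μ2
    by_cases h : 0 < μ2
    · obtain ⟨t, z0, hp⟩ := key_s7 θ μ2 C hθ h hC0 hC4
      exact ⟨t, z0, fun _ => hp⟩
    · exact ⟨0, 0, fun h' => absurd h' h⟩
  choose F1 F2 hF using key'
  have hF1anti : StrictAntiOn F1 (Set.Ioi 0) := by
    intro μ2 hμ2 μ2' hμ2' hlt
    obtain ⟨ht0, hmem, hstrict, hval, hsum, -⟩ := hF μ2 hμ2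
    obtain ⟨ht0', hmem', hstrict', hval', hsum', -⟩ := hF μ2' hμ2'
    by_contra hc
    push_neg at hc
    have hglob : ∀ w : ℝ, fmin θ (F1 μ2) μ2 (F2 μ2) ≤ fmin θ (F1 μ2) μ2 w := fun w => by
      by_cases h : w = F2 μ2
      · rw [h]
      · exact (hstrict w h).le
    have h1 : fmin θ (F1 μ2) μ2 (F2 μ2') < fmin θ (F1 μ2') μ2' (F2 μ2') := by
      simp only [fmin]
      nlinarith [sq_nonneg (F2 μ2' - θ), sq_nonneg (F2 μ2' + θ),
        mul_pos (show (0:ℝ) < F1 μ2 + (F2 μ2' + θ) ^ 2 by have := sq_nonneg (F2 μ2' + θ); linarith) (sub_pos.2 hlt),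
        mul_nonneg (sub_nonneg.2 hc) (show (0:ℝ) ≤ μ2' + (F2 μ2' - θ) ^ 2 by
          have h := sq_nonneg (F2 μ2' - θ); have h2 := le_of_lt (Set.mem_Ioi.mp hμ2'); linarith)]
    have h2 := hglob (F2 μ2')
    rw [hval, hval'] at *
    linarith [h2.trans_lt h1, hval, hval']
  have hF2anti : StrictAntiOn F2 (Set.Ioi 0) := by
    intro μ2 hμ2 μ2' hμ2' hlt
    obtain ⟨ht0, hmem, hstrict, hval, hsum, -⟩ := hF μ2 hμ2
    obtain ⟨ht0', hmem', hstrict', hval', hsum', -⟩ := hF μ2' hμ2'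
    have ht : F1 μ2' < F1 μ2 := hF1anti hμ2 hμ2' hlt
    have hr := root_of_min θ (F1 μ2) μ2 (F2 μ2) hstrict
    have hr' := root_of_min θ (F1 μ2') μ2' (F2 μ2') hstrict'
    by_contra hc
    push_neg at hc
    have hcube : 0 ≤ (F2 μ2' - F2 μ2) * ((F2 μ2' + F2 μ2) ^ 2 + F2 μ2' ^ 2 + F2 μ2 ^ 2) :=
      mul_nonneg (by linarith) (by positivity)
    have ha' : 0 ≤ (F2 μ2' - F2 μ2) * (F1 μ2' + μ2' - 2 * θ ^ 2) :=
      mul_nonneg (by linarith) (by linarith)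
    have hp1 : 0 < (F1 μ2 - F1 μ2') * (θ - F2 μ2) :=
      mul_pos (by linarith) (by linarith [hmem.2])
    have hp2 : 0 < (μ2' - μ2) * (F2 μ2 + θ) :=
      mul_pos (by linarith) (by linarith [hmem.1])
    nlinarith [hr, hr', hcube, ha', hp1, hp2]
  have hGform : ∀ u zb : ℝ, Gfun θ r1 r2 g1 g2 κ1 κ2 m1 m2 u zb =
      (κ2 * g1 / (g2 * m2 * κ1)) * (((zb + θ) ^ 2 + u) * (g1 * u + r1 - m1)) + (m2 - r2) / g2 := by
    intro u zb
    simp only [Gfun]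
    field_simp
    ring
  have hcoef : 0 < κ2 * g1 / (g2 * m2 * κ1) := by positivity
  refine ⟨F1, F2, ?_, hF1anti, hF2anti, ?_, ?_⟩
  · intro μ2 hμ2
    obtain ⟨ht0, hmem, hstrict, hval, hsum, huniq⟩ := hF μ2 hμ2
    constructor
    · refine ⟨ht0, ⟨hmem.1.le, hmem.2.le⟩, ?_, ?_, hval⟩
      · intro z
        by_cases h : z = F2 μ2
        · rw [h]
        · exact (hstrict z h).le
      · intro z hz
        by_contra h
        exact absurd hz (ne_of_gt (hstrict z h))
    · intro μ1 zb hμ1 hzbK hzb _ hzbC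
      exact huniq μ1 zb hμ1 hzbK hzb hzbC
  · intro zb hzb x hx y hy hxy
    simp only
    rw [hGform, hGform]
    apply add_lt_add_left
    apply (mul_lt_mul_iff_right₀ hcoef).2
    nlinarith [sq_nonneg (zb + θ), mul_pos (sub_pos.2 hxy) hg1, mul_pos hg1 hx,
      mul_pos hg1 (hx.trans hxy)]
  · intro μ1 hμ1 x hx y hy hxy
    simp only
    rw [hGform, hGform]
    apply add_lt_add_left
    apply (mul_lt_mul_iff_right₀ hcoef).2
    have hB : 0 < g1 * μ1 + r1 - m1 := by nlinarith [mul_pos hg1 hμ1]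
    nlinarith [mul_pos (mul_pos (sub_pos.2 hxy) (show (0:ℝ) < x + θ + (y + θ) by
      have := hx.1; linarith)) hB]
end

section
/- Assume θ > 0, g_1, g_2, κ_1, κ_2 > 0, m_1, m_2 > 0, r_1 − m_1 > 0, and m_1 m_2 < 4 g_1 g_2 θ^4, and set μ* = m_1 m_2/(4 θ^2 g_1 g_2). Then: (i) for every μ_2 ∈ (0,∞) with μ_2 ≠ μ*, there exist a unique μ_1 ∈ (0,∞) and a unique point z̄ ∈ [−θ, θ] such that z̄ is the unique global minimum point of z ↦ f(z; μ_1, μ_2) and min_{z∈ℝ} f(z; μ_1, μ_2) = f(z̄; μ_1, μ_2) = m_1 m_2/(g_1 g_2); denote F̃_1(μ_2) = μ_1 and F̃_2(μ_2) = z̄; (ii) F̃_1 and F̃_2 are strictly decreasing on the interval (0, μ*) and on the interval (μ*, +∞). -/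
set_option maxHeartbeats 1000000


open Real Set Filter MeasureTheory

noncomputable def phiF (θ C z : ℝ) : ℝ := Real.sqrt (C * (θ - z) / (θ + z)) - (θ - z)^2

lemma phiF_Qpos {θ C z : ℝ} (hC : 0 < C) (h1 : -θ < z) (h2 : z < θ) :
    0 < phiF θ C z + (θ - z)^2 := by
  have h : 0 < C * (θ - z) / (θ + z) := div_pos (mul_pos hC (by linarith)) (by linarith)
  simpa [phiF] using Real.sqrt_pos.mpr h

lemma phiF_sq {θ C z : ℝ} (hC : 0 ≤ C) (h1 : -θ < z) (h2 : z ≤ θ) :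
    (phiF θ C z + (θ - z)^2)^2 * (θ + z) = C * (θ - z) := by
  have harg : 0 ≤ C * (θ - z) / (θ + z) := by
    apply div_nonneg (mul_nonneg hC (by linarith)) (by linarith)
  have h : Real.sqrt (C * (θ - z) / (θ + z)) ^ 2 = C * (θ - z) / (θ + z) :=
    Real.sq_sqrt harg
  have hne : θ + z ≠ 0 := by linarith
  have he : phiF θ C z + (θ - z)^2 = Real.sqrt (C * (θ - z) / (θ + z)) := by
    unfold phiF; ring
  rw [he, h]
  field_simp

lemma phiF_theta (θ C : ℝ) : phiF θ C θ = 0 := by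
  simp [phiF]

-- phiF at a point with θ²-z² = C/(4θ²)
lemma phiF_crit {θ C z : ℝ} (hθ : 0 < θ) (hC : 0 < C) (h1 : -θ < z) (h2 : z < θ)
    (hb : θ^2 - z^2 = C/(4*θ^2)) : phiF θ C z = C/(4*θ^2) := by
  have hθ2 : (4*θ^2) ≠ 0 := by positivity
  have harg : C * (θ - z) / (θ + z) = (C/(4*θ^2) + (θ - z)^2)^2 := by
    have hC4 : C = 4*θ^2*(θ^2 - z^2) := by
      rw [eq_div_iff hθ2] at hb; linear_combination -hb
    have hkey : C/(4*θ^2) + (θ - z)^2 = 2*θ*(θ-z) := by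
      rw [hC4]; field_simp; ring
    rw [hkey, hC4]
    have hne : θ + z ≠ 0 := by linarith
    field_simp
    ring
  unfold phiF
  rw [harg, Real.sqrt_sq (by nlinarith [sq_nonneg (θ - z)] : (0:ℝ) ≤ C/(4*θ^2) + (θ - z)^2)]
  ring

lemma anti_core {θ C z z' Q Q' : ℝ} (hθ : 0 < θ) (hC : 0 < C)
    (h1 : -θ < z) (h2 : z < z') (h3 : z' < θ)
    (hb : θ^2 - z^2 ≤ C/(4*θ^2)) (hb' : θ^2 - z'^2 ≤ C/(4*θ^2))
    (hside : z + z' ≠ 0 ∨ θ^2 - z^2 < C/(4*θ^2))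
    (hQpos : 0 < Q) (hQ'pos : 0 < Q')
    (hQsq : Q^2 * (θ + z) = C * (θ - z)) (hQ'sq : Q'^2 * (θ + z') = C * (θ - z')) :
    Q' - (θ - z')^2 < Q - (θ - z)^2 := by
  have h1' : -θ < z' := by linarith
  have h2' : z < θ := by linarith
  -- Q*(θ+z) ≤ C/(2θ), strict if branch strict
  have hzpos : 0 < θ + z := by linarith
  have hz'pos : 0 < θ + z' := by linarith
  have hCθ : (0:ℝ) ≤ C/(2*θ) := le_of_lt (div_pos hC (by linarith))
  have hk : Q * (θ + z) ≤ C/(2*θ) := by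
    have hsq : (Q * (θ + z))^2 = C * (θ^2 - z^2) := by
      linear_combination (θ+z) * hQsq
    have hle : (Q * (θ + z))^2 ≤ (C/(2*θ))^2 := by
      rw [hsq]
      calc C * (θ^2 - z^2) ≤ C * (C/(4*θ^2)) := mul_le_mul_of_nonneg_left hb hC.le
        _ = (C/(2*θ))^2 := by field_simp; ring
    exact le_of_pow_le_pow_left₀ two_ne_zero hCθ hle
  have hk' : Q' * (θ + z') ≤ C/(2*θ) := by
    have hsq : (Q' * (θ + z'))^2 = C * (θ^2 - z'^2) := by
      linear_combination (θ+z') * hQ'sq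
    have hle : (Q' * (θ + z'))^2 ≤ (C/(2*θ))^2 := by
      rw [hsq]
      calc C * (θ^2 - z'^2) ≤ C * (C/(4*θ^2)) := mul_le_mul_of_nonneg_left hb' hC.le
        _ = (C/(2*θ))^2 := by field_simp; ring
    exact le_of_pow_le_pow_left₀ two_ne_zero hCθ hle
  -- kstrict: if branch strict at z, then Q*(θ+z) < C/(2θ)
  have hdiff : (Q^2*(θ+z))*(θ+z') - (Q'^2*(θ+z'))*(θ+z) = 2*θ*C*(z'-z) := by
    rw [hQsq, hQ'sq]; ring
  have hu : 2*θ - z - z' > 0 := by linarith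
  -- main strict bound
  have hmain : (Q + Q') * ((θ+z)*(θ+z')) * (2*θ - z - z') < 2*θ*C := by
    have e1 : (Q + Q') * ((θ+z)*(θ+z')) = (Q*(θ+z))*(θ+z') + (Q'*(θ+z'))*(θ+z) := by ring
    rcases hside with hs | hs
    · have hle : (Q + Q') * ((θ+z)*(θ+z')) ≤ (C/(2*θ))*(θ+z') + (C/(2*θ))*(θ+z) := by
        rw [e1]
        gcongr
      have h2' : (C/(2*θ))*(θ+z') + (C/(2*θ))*(θ+z) = C/(2*θ)*(2*θ+z+z') := by ring
      have hfin : C/(2*θ)*(2*θ+z+z')*(2*θ-z-z') < 2*θ*C := by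
        have hsq0 : 0 < (z+z')^2 := lt_of_le_of_ne (sq_nonneg _) (Ne.symm (pow_ne_zero 2 hs))
        have : (2*θ+z+z')*(2*θ-z-z') < 4*θ^2 := by nlinarith [hsq0]
        have hCpos : 0 < C/(2*θ) := div_pos hC (by linarith)
        calc C/(2*θ)*(2*θ+z+z')*(2*θ-z-z') = C/(2*θ)*((2*θ+z+z')*(2*θ-z-z')) := by ring
          _ < C/(2*θ)*(4*θ^2) := by exact (mul_lt_mul_iff_right₀ hCpos).mpr this
          _ = 2*θ*C := by field_simp; ring
      have step1 : (Q + Q') * ((θ+z)*(θ+z')) * (2*θ - z - z')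
          ≤ (C/(2*θ)*(2*θ+z+z'))*(2*θ - z - z') := by
        rw [← h2']
        exact mul_le_mul_of_nonneg_right hle hu.le
      have step2 : (C/(2*θ)*(2*θ+z+z'))*(2*θ - z - z') < 2*θ*C := hfin
      linarith
    · -- strict branch at z: Q*(θ+z) < C/(2θ)
      have hkstrict : Q * (θ + z) < C/(2*θ) := by
        have hsq : (Q * (θ + z))^2 = C * (θ^2 - z^2) := by
          linear_combination (θ+z) * hQsq
        have hlt : (Q * (θ + z))^2 < (C/(2*θ))^2 := by
          rw [hsq]
          calc C * (θ^2 - z^2) < C * (C/(4*θ^2)) := (mul_lt_mul_iff_right₀ hC).mpr hs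
            _ = (C/(2*θ))^2 := by field_simp; ring
        exact lt_of_pow_lt_pow_left₀ 2 hCθ hlt
      have hlt2 : (Q + Q') * ((θ+z)*(θ+z')) < (C/(2*θ))*(θ+z') + (C/(2*θ))*(θ+z) := by
        rw [e1]
        have a1 : (Q*(θ+z))*(θ+z') < (C/(2*θ))*(θ+z') := by
          exact (mul_lt_mul_iff_left₀ hz'pos).mpr hkstrict
        have a2 : (Q'*(θ+z'))*(θ+z) ≤ (C/(2*θ))*(θ+z) := by
          exact mul_le_mul_of_nonneg_right hk' hzpos.le
        linarith
      have hfin : C/(2*θ)*(2*θ+z+z')*(2*θ-z-z') ≤ 2*θ*C := by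
        have : (2*θ+z+z')*(2*θ-z-z') ≤ 4*θ^2 := by nlinarith [sq_nonneg (z+z')]
        have hCpos : 0 < C/(2*θ) := div_pos hC (by linarith)
        calc C/(2*θ)*(2*θ+z+z')*(2*θ-z-z') = C/(2*θ)*((2*θ+z+z')*(2*θ-z-z')) := by ring
          _ ≤ C/(2*θ)*(4*θ^2) := by exact (mul_le_mul_iff_right₀ hCpos).mpr this
          _ = 2*θ*C := by field_simp; ring
      calc (Q + Q') * ((θ+z)*(θ+z')) * (2*θ - z - z')
          < ((C/(2*θ))*(θ+z') + (C/(2*θ))*(θ+z))*(2*θ - z - z') := by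
            exact (mul_lt_mul_iff_left₀ hu).mpr hlt2
        _ = C/(2*θ)*(2*θ+z+z')*(2*θ-z-z') := by ring
        _ ≤ 2*θ*C := hfin
  -- conclude Q - Q' > (z'-z)*(2θ-z-z')
  have hS : 0 < (Q + Q') * ((θ+z)*(θ+z')) := by positivity
  have hQQ' : (Q - Q') * ((Q + Q') * ((θ+z)*(θ+z'))) = 2*θ*C*(z'-z) := by
    linear_combination hdiff
  have hzz : 0 < z' - z := by linarith
  have hgt : (z'-z)*(2*θ-z-z') < Q - Q' := by
    by_contra hcon
    push_neg at hcon
    have : 2*θ*C*(z'-z) ≤ ((z'-z)*(2*θ-z-z')) * ((Q + Q') * ((θ+z)*(θ+z'))) := by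
      rw [← hQQ']
      exact mul_le_mul_of_nonneg_right hcon hS.le
    have h5 : ((z'-z)*(2*θ-z-z')) * ((Q + Q') * ((θ+z)*(θ+z')))
        < (z'-z) * (2*θ*C) := by
      have := mul_lt_mul_of_pos_left hmain hzz
      calc ((z'-z)*(2*θ-z-z')) * ((Q + Q') * ((θ+z)*(θ+z')))
          = (z'-z) * ((Q + Q') * ((θ+z)*(θ+z')) * (2*θ-z-z')) := by ring
        _ < (z'-z) * (2*θ*C) := this
    have hring : (z'-z) * (2*θ*C) = 2*θ*C*(z'-z) := by ring
    linarith
  have hexp : (θ-z)^2 - (θ-z')^2 = (z'-z)*(2*θ-z-z') := by ring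
  linarith

lemma phiF_anti {θ C z z' : ℝ} (hθ : 0 < θ) (hC : 0 < C)
    (h1 : -θ < z) (h2 : z < z') (h3 : z' < θ)
    (hb : θ^2 - z^2 ≤ C/(4*θ^2)) (hb' : θ^2 - z'^2 ≤ C/(4*θ^2))
    (hside : z + z' ≠ 0 ∨ θ^2 - z^2 < C/(4*θ^2)) :
    phiF θ C z' < phiF θ C z := by
  have h1' : -θ < z' := by linarith
  have h2' : z < θ := by linarith
  have key := anti_core hθ hC h1 h2 h3 hb hb' hside (phiF_Qpos hC h1 h2')
    (phiF_Qpos hC h1' h3) (phiF_sq hC.le h1 h2'.le) (phiF_sq hC.le h1' h3.le)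
  linarith [key]



def Good (θ C μ2 μ1 zb : ℝ) : Prop :=
  0 < μ1 ∧ zb ∈ Set.Icc (-θ) θ ∧
  (∀ z : ℝ, fmin θ μ1 μ2 zb ≤ fmin θ μ1 μ2 z) ∧
  (∀ z : ℝ, fmin θ μ1 μ2 z = fmin θ μ1 μ2 zb → z = zb) ∧
  fmin θ μ1 μ2 zb = C

lemma key_id (θ C μ1 μ2 zb z : ℝ)
    (hstat : (θ+zb)*(μ2+(θ-zb)^2) = (θ-zb)*(μ1+(θ+zb)^2))
    (hval : (μ1+(θ+zb)^2)*(μ2+(θ-zb)^2) = C) :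
    fmin θ μ1 μ2 z - C = (z-zb)^2*((z+zb)^2 + ((μ1+(θ+zb)^2)+(μ2+(θ-zb)^2)-4*θ^2)) := by
  unfold fmin
  linear_combination (2*(z-zb))*hstat + hval

lemma pos_sq_eq {x y : ℝ} (hx : 0 < x) (hy : 0 < y) (h : x^2 = y^2) : x = y := by
  have h3 : (x-y)*(x+y) = 0 := by linear_combination h
  rcases mul_eq_zero.mp h3 with h4 | h4 <;> linarith

-- abstract core: P+Q > 4θ² from relations
lemma sum_gt {θ C μ1 μ2 zb : ℝ} (hθ : 0 < θ) (hC : 0 < C)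
    (h1 : -θ < zb) (h2 : zb < θ) (hbig : 4*θ^2*(θ^2-zb^2) < C)
    (hPpos : 0 < μ1 + (θ+zb)^2)
    (hstat : (θ+zb)*(μ2+(θ-zb)^2) = (θ-zb)*(μ1+(θ+zb)^2))
    (hPsq : (μ1 + (θ + zb)^2)^2 * (θ - zb) = C * (θ + zb)) :
    4*θ^2 < (μ1+(θ+zb)^2) + (μ2+(θ-zb)^2) := by
  have hz1 : 0 < θ - zb := by linarith
  have hz2 : 0 < θ + zb := by linarith
  have e1 : ((μ1+(θ+zb)^2) + (μ2+(θ-zb)^2))*((θ-zb)*(θ+zb)) = 2*θ*((θ-zb)*(μ1+(θ+zb)^2)) := by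
    linear_combination (θ-zb)*hstat
  have e2 : ((θ-zb)*(μ1+(θ+zb)^2))^2 = C*(θ^2-zb^2) := by
    linear_combination (θ-zb)*hPsq
  have hkpos : 0 < (θ-zb)*(μ1+(θ+zb)^2) := mul_pos hz1 hPpos
  have hzz : 0 < θ^2 - zb^2 := by nlinarith
  have hk2 : (2*θ*(θ^2-zb^2))^2 < ((θ-zb)*(μ1+(θ+zb)^2))^2 := by
    rw [e2]
    have := mul_lt_mul_of_pos_right hbig hzz
    nlinarith [this]
  have hkgt : 2*θ*(θ^2-zb^2) < (θ-zb)*(μ1+(θ+zb)^2) :=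
    lt_of_pow_lt_pow_left₀ 2 hkpos.le hk2
  have h8 := mul_lt_mul_of_pos_left hkgt (by linarith : (0:ℝ) < 2*θ)
  nlinarith [h8, e1, hzz]

lemma good_core {θ C μ1 μ2 zb : ℝ} (hθ : 0 < θ) (hC : 0 < C)
    (h1 : -θ < zb) (h2 : zb < θ)
    (hbr : θ^2 - zb^2 < C/(4*θ^2)) (hμ2 : 0 < μ2)
    (hQsq : (μ2 + (θ - zb)^2)^2 * (θ + zb) = C * (θ - zb))
    (hPsq : (μ1 + (θ + zb)^2)^2 * (θ - zb) = C * (θ + zb))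
    (hPpos : 0 < μ1 + (θ + zb)^2) (hQpos : 0 < μ2 + (θ - zb)^2) :
    Good θ C μ2 μ1 zb := by
  have hz1 : 0 < θ - zb := by linarith
  have hz2 : 0 < θ + zb := by linarith
  have hzz : 0 < θ^2 - zb^2 := by nlinarith
  have hbig : 4*θ^2*(θ^2-zb^2) < C := by
    rw [lt_div_iff₀ (by positivity : (0:ℝ) < 4*θ^2)] at hbr; linarith
  -- stationarity
  have hstat : (θ+zb)*(μ2+(θ-zb)^2) = (θ-zb)*(μ1+(θ+zb)^2) := by
    apply pos_sq_eq (mul_pos hz2 hQpos) (mul_pos hz1 hPpos)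
    linear_combination (θ+zb)*hQsq - (θ-zb)*hPsq
  -- value
  have hval : (μ1+(θ+zb)^2)*(μ2+(θ-zb)^2) = C := by
    apply pos_sq_eq (mul_pos hPpos hQpos) hC
    have e3 : (((μ1+(θ+zb)^2)*(μ2+(θ-zb)^2))^2 - C^2)*((θ-zb)*(θ+zb)) = 0 := by
      linear_combination ((μ2+(θ-zb)^2)^2*(θ+zb))*hPsq + (C*(θ+zb))*hQsq
    have := mul_eq_zero.mp e3
    rcases this with h | h
    · linarith [h]
    · exfalso; nlinarith
  -- μ1 > 0
  have hμ1 : 0 < μ1 := by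
    have h4θ : (θ+zb)^2 < 4*θ^2 := by nlinarith
    have e5 : (θ+zb)^2 < μ1 + (θ+zb)^2 := by
      by_contra hcon
      push_neg at hcon
      have hP2 : (μ1+(θ+zb)^2)^2 ≤ ((θ+zb)^2)^2 := by nlinarith [hPpos]
      have hle : C*(θ+zb) ≤ ((θ+zb)^2)^2*(θ-zb) := by
        rw [← hPsq]
        exact mul_le_mul_of_nonneg_right hP2 hz1.le
      have h6 : (θ+zb)^2*((θ^2-zb^2)*(θ+zb)) < 4*θ^2*((θ^2-zb^2)*(θ+zb)) :=
        mul_lt_mul_of_pos_right h4θ (mul_pos hzz hz2)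
      have h7 := mul_lt_mul_of_pos_right hbig hz2
      nlinarith [hle, h6, h7]
    linarith
  have hP4 : 4*θ^2 < (μ1+(θ+zb)^2) + (μ2+(θ-zb)^2) := sum_gt hθ hC h1 h2 hbig hPpos hstat hPsq
  have hfzb : fmin θ μ1 μ2 zb = C := by unfold fmin; linear_combination hval
  refine ⟨hμ1, ⟨h1.le, h2.le⟩, ?_, ?_, hfzb⟩
  · intro z
    have hk := key_id θ C μ1 μ2 zb z hstat hval
    have hbpos : 0 < (z+zb)^2 + ((μ1+(θ+zb)^2)+(μ2+(θ-zb)^2)-4*θ^2) := by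
      linarith [sq_nonneg (z+zb), hP4]
    linarith [hk, mul_nonneg (sq_nonneg (z-zb)) hbpos.le]
  · intro z hz
    have hk := key_id θ C μ1 μ2 zb z hstat hval
    rw [hz, hfzb] at hk
    have hbpos : 0 < (z+zb)^2 + ((μ1+(θ+zb)^2)+(μ2+(θ-zb)^2)-4*θ^2) := by
      linarith [sq_nonneg (z+zb), hP4]
    have hz0 : (z-zb)^2 = 0 := by
      by_contra hcon
      have hpos : 0 < (z-zb)^2 := lt_of_le_of_ne (sq_nonneg _) (Ne.symm hcon)
      nlinarith [mul_pos hpos hbpos]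
    have := pow_eq_zero_iff (n := 2) (by norm_num) |>.mp hz0
    linarith [this, sub_eq_zero.mp this]

lemma good_of_branch {θ C zb : ℝ} (hθ : 0 < θ) (hC : 0 < C)
    (h1 : -θ < zb) (h2 : zb < θ) (hbr : θ^2 - zb^2 < C/(4*θ^2))
    (hμ2 : 0 < phiF θ C zb) :
    Good θ C (phiF θ C zb) (phiF θ C (-zb)) zb := by
  have h1' : -θ < -zb := by linarith
  have h2' : -zb < θ := by linarith
  have hQsq := phiF_sq (θ := θ) (C := C) (z := zb) hC.le h1 h2.le
  have hPsq := phiF_sq (θ := θ) (C := C) (z := -zb) hC.le h1' h2'.le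
  have hQpos := phiF_Qpos (θ := θ) (C := C) (z := zb) hC h1 h2
  have hPpos := phiF_Qpos (θ := θ) (C := C) (z := -zb) hC h1' h2'
  rw [show θ - -zb = θ + zb by ring, show θ + -zb = θ - zb by ring] at hPsq
  rw [show θ - -zb = θ + zb by ring] at hPpos
  exact good_core hθ hC h1 h2 hbr hμ2 hQsq hPsq hPpos hQpos

lemma branch_of_good {θ C μ1 μ2 zb : ℝ} (hθ : 0 < θ) (hC : 0 < C) (hA : C < 4*θ^4)
    (hμ2 : 0 < μ2) (hg : Good θ C μ2 μ1 zb) :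
    -θ < zb ∧ zb < θ ∧ θ^2 - zb^2 < C/(4*θ^2) ∧ phiF θ C zb = μ2 ∧ phiF θ C (-zb) = μ1 := by
  obtain ⟨hμ1, ⟨hge, hle⟩, hmin, huniq, hval0⟩ := hg
  have hder : HasDerivAt (fun z => fmin θ μ1 μ2 z)
      ((2*(zb+θ)) * (μ2+(zb-θ)^2) + (μ1+(zb+θ)^2) * (2*(zb-θ))) zb := by
    have d1 : HasDerivAt (fun z : ℝ => μ1 + (z+θ)^2) (2*(zb+θ)) zb := by
      have h := (((hasDerivAt_id zb).add_const θ).pow 2).const_add μ1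
      norm_num at h
      exact h.const_add μ1
    have d2 : HasDerivAt (fun z : ℝ => μ2 + (z-θ)^2) (2*(zb-θ)) zb := by
      have h := (((hasDerivAt_id zb).sub_const θ).pow 2).const_add μ2
      norm_num at h
      exact h.const_add μ2
    have h := d1.mul d2
    exact h
  have hlocmin : IsLocalMin (fun z => fmin θ μ1 μ2 z) zb :=
    Filter.Eventually.of_forall (fun z => hmin z)
  have hd0 := hlocmin.hasDerivAt_eq_zero hder
  have hzlt : zb < θ := by
    rcases lt_or_eq_of_le hle with h | h
    · exact h
    · exfalso; subst h; nlinarith [hd0, hμ2, hθ]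
  have hzgt : -θ < zb := by
    rcases lt_or_eq_of_le hge with h | h
    · exact h
    · exfalso
      have h' : zb = -θ := h.symm
      subst h'; nlinarith [hd0, hμ1, hθ]
  have hz1 : 0 < θ - zb := by linarith
  have hz2 : 0 < θ + zb := by linarith
  have hzz : 0 < θ^2 - zb^2 := by nlinarith
  have hstat : (θ+zb)*(μ2+(θ-zb)^2) = (θ-zb)*(μ1+(θ+zb)^2) := by
    linear_combination hd0 / 2
  have hval : (μ1+(θ+zb)^2)*(μ2+(θ-zb)^2) = C := by
    unfold fmin at hval0; linear_combination hval0
  have hPpos : 0 < μ1 + (θ+zb)^2 := by positivity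
  have hQpos : 0 < μ2 + (θ-zb)^2 := by positivity
  -- branch condition
  have hbr : θ^2 - zb^2 < C/(4*θ^2) := by
    by_cases hzb0 : zb = 0
    · exfalso
      subst hzb0
      have hμeq : μ1 = μ2 := by
        have h := mul_left_cancel₀ (ne_of_gt hθ) (by linear_combination hstat :
          θ * (μ2+(θ-0)^2) = θ * (μ1+(θ+0)^2))
        nlinarith [h]
      rw [← hμeq] at hval
      have hμ1θ : μ1 < θ^2 := by nlinarith [hval, hμ1]
      set z' := Real.sqrt (θ^2 - μ1) with hz'
      have hz'sq : z'^2 = θ^2 - μ1 := Real.sq_sqrt (by linarith)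
      have hfz' : fmin θ μ1 μ2 z' = 4*θ^2*μ1 := by
        unfold fmin
        rw [← hμeq]
        linear_combination (z'^2 + μ1 - θ^2) * hz'sq
      have hc := hmin z'
      rw [hval0, hfz'] at hc
      nlinarith [hc, hval, hμ1θ]
    · have hkey := key_id θ C μ1 μ2 zb (-zb) hstat hval
      have hfnzb : C ≤ fmin θ μ1 μ2 (-zb) := by rw [← hval0]; exact hmin (-zb)
      have hzb2 : 0 < zb^2 := lt_of_le_of_ne (sq_nonneg _) (Ne.symm (pow_ne_zero 2 hzb0))
      have hS : 0 ≤ (μ1+(θ+zb)^2)+(μ2+(θ-zb)^2)-4*θ^2 := by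
        by_contra hcon
        push_neg at hcon
        nlinarith [hkey, hfnzb, mul_pos hzb2 (by linarith : 0 < -((μ1+(θ+zb)^2)+(μ2+(θ-zb)^2)-4*θ^2))]
      have hSpos : 0 < (μ1+(θ+zb)^2)+(μ2+(θ-zb)^2)-4*θ^2 := by
        rcases lt_or_eq_of_le hS with h | h
        · exact h
        · exfalso
          have hS0 : (μ1+(θ+zb)^2)+(μ2+(θ-zb)^2)-4*θ^2 = 0 := h.symm
          have hfeq : fmin θ μ1 μ2 (-zb) = fmin θ μ1 μ2 zb := by
            rw [hval0]; linear_combination hkey + (-zb-zb)^2*hS0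
          have := huniq (-zb) hfeq
          apply hzb0; linarith
      -- now reverse: C > 4θ²(θ²-zb²)
      rw [lt_div_iff₀ (by positivity : (0:ℝ) < 4*θ^2)]
      have e1 : ((μ1+(θ+zb)^2) + (μ2+(θ-zb)^2))*((θ-zb)*(θ+zb)) = 2*θ*((θ-zb)*(μ1+(θ+zb)^2)) := by
        linear_combination (θ-zb)*hstat
      have e2 : ((θ-zb)*(μ1+(θ+zb)^2))^2 = C*(θ^2-zb^2) := by
        linear_combination (-(θ-zb)*(μ1+(θ+zb)^2))*hstat + (θ^2-zb^2)*hval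
      have hkpos : 0 < (θ-zb)*(μ1+(θ+zb)^2) := mul_pos hz1 hPpos
      have hkgt : 2*θ*(θ^2-zb^2) < (θ-zb)*(μ1+(θ+zb)^2) := by
        nlinarith [e1, mul_pos hSpos hzz, hθ, hzz]
      have h9 : (2*θ*(θ^2-zb^2))^2 < ((θ-zb)*(μ1+(θ+zb)^2))^2 :=
        pow_lt_pow_left₀ hkgt (by positivity) (by norm_num)
      rw [e2] at h9
      nlinarith [h9, hzz]
  -- phiF identities
  have hQrel : (μ2+(θ-zb)^2)^2*(θ+zb) = C*(θ-zb) := by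
    linear_combination (μ2+(θ-zb)^2)*hstat + (θ-zb)*hval
  have hPrel : (μ1+(θ+zb)^2)^2*(θ-zb) = C*(θ+zb) := by
    linear_combination (-(μ1+(θ+zb)^2))*hstat + (θ+zb)*hval
  have hphi2 : phiF θ C zb = μ2 := by
    have hsq := phiF_sq (θ := θ) (C := C) (z := zb) hC.le hzgt hzlt.le
    have hpos := phiF_Qpos (θ := θ) (C := C) (z := zb) hC hzgt hzlt
    have heq : (phiF θ C zb + (θ-zb)^2)^2 = (μ2+(θ-zb)^2)^2 := by
      apply mul_right_cancel₀ (ne_of_gt hz2)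
      rw [hsq, hQrel]
    have := pos_sq_eq hpos hQpos heq
    linarith
  have hphi1 : phiF θ C (-zb) = μ1 := by
    have h1' : -θ < -zb := by linarith
    have h2' : -zb < θ := by linarith
    have hsq := phiF_sq (θ := θ) (C := C) (z := -zb) hC.le h1' h2'.le
    have hpos := phiF_Qpos (θ := θ) (C := C) (z := -zb) hC h1' h2'
    rw [show θ - -zb = θ + zb by ring, show θ + -zb = θ - zb by ring] at hsq
    rw [show θ - -zb = θ + zb by ring] at hpos
    have heq : (phiF θ C (-zb) + (θ+zb)^2)^2 = (μ1+(θ+zb)^2)^2 := by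
      apply mul_right_cancel₀ (ne_of_gt hz1)
      rw [hsq, hPrel]
    have := pos_sq_eq hpos hPpos heq
    linarith
  exact ⟨hzgt, hzlt, hbr, hphi2, hphi1⟩

lemma good_unique {θ C μ2 μ1 zb μ1' zb' : ℝ} (hθ : 0 < θ) (hC : 0 < C) (hA : C < 4*θ^4)
    (hμ2 : 0 < μ2) (hg : Good θ C μ2 μ1 zb) (hg' : Good θ C μ2 μ1' zb') :
    μ1 = μ1' ∧ zb = zb' := by
  obtain ⟨h1, h2, hbr, hphi, hpsi⟩ := branch_of_good hθ hC hA hμ2 hg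
  obtain ⟨h1', h2', hbr', hphi', hpsi'⟩ := branch_of_good hθ hC hA hμ2 hg'
  have hz : zb = zb' := by
    rcases lt_trichotomy zb zb' with h | h | h
    · exfalso
      have := phiF_anti hθ hC h1 h h2' hbr.le hbr'.le (Or.inr hbr)
      rw [hphi, hphi'] at this; linarith
    · exact h
    · exfalso
      have := phiF_anti hθ hC h1' h h2 hbr'.le hbr.le (Or.inr hbr')
      rw [hphi, hphi'] at this; linarith
  subst hz
  exact ⟨hpsi.symm.trans hpsi', rfl⟩

lemma good_mono {θ C a b μ1a za μ1b zc : ℝ} (hθ : 0 < θ) (hC : 0 < C) (hA : C < 4*θ^4)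
    (ha : 0 < a) (hb : 0 < b) (hab : a < b)
    (hga : Good θ C a μ1a za) (hgb : Good θ C b μ1b zc) : zc < za ∧ μ1b < μ1a := by
  obtain ⟨ha1, ha2, hbra, hphia, hpsia⟩ := branch_of_good hθ hC hA ha hga
  obtain ⟨hb1, hb2, hbrb, hphib, hpsib⟩ := branch_of_good hθ hC hA hb hgb
  have hzz : zc < za := by
    rcases lt_trichotomy zc za with h | h | h
    · exact h
    · exfalso; rw [← h, hphib] at hphia; linarith
    · exfalso
      have := phiF_anti hθ hC ha1 h hb2 hbra.le hbrb.le (Or.inr hbra)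
      rw [hphia, hphib] at this; linarith
  refine ⟨hzz, ?_⟩
  have hbra' : θ^2 - (-za)^2 ≤ C/(4*θ^2) := by rw [neg_sq]; exact hbra.le
  have hbrb' : θ^2 - (-zc)^2 ≤ C/(4*θ^2) := by rw [neg_sq]; exact hbrb.le
  have hbra'' : θ^2 - (-za)^2 < C/(4*θ^2) := by rw [neg_sq]; exact hbra
  have := phiF_anti hθ hC (show -θ < -za by linarith) (show -za < -zc by linarith)
    (show -zc < θ by linarith) hbra' hbrb' (Or.inr hbra'')
  rw [hpsia, hpsib] at this
  exact this

lemma exists_good {θ C μ2 : ℝ} (hθ : 0 < θ) (hC : 0 < C) (hA : C < 4*θ^4)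
    (hμ2 : 0 < μ2) (hne : μ2 ≠ C/(4*θ^2)) : ∃ μ1 zb, Good θ C μ2 μ1 zb := by
  have hμst_pos : 0 < C/(4*θ^2) := by positivity
  have hμst_lt : C/(4*θ^2) < θ^2 := by
    rw [div_lt_iff₀ (by positivity : (0:ℝ) < 4*θ^2)]; nlinarith
  set z0 := Real.sqrt (θ^2 - C/(4*θ^2)) with hz0def
  have hz0sq : z0^2 = θ^2 - C/(4*θ^2) := Real.sq_sqrt (by linarith)
  have hz0pos : 0 < z0 := Real.sqrt_pos.mpr (by linarith)
  have hz0lt : z0 < θ := by nlinarith [hz0sq, hz0pos]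
  have hphiz0 : phiF θ C z0 = C/(4*θ^2) :=
    phiF_crit hθ hC (by linarith) hz0lt (by linarith [hz0sq])
  have hcont : ∀ a b : ℝ, -θ < a → ContinuousOn (phiF θ C) (Set.Icc a b) := by
    intro a b hagt
    unfold phiF
    apply ContinuousOn.sub
    · apply Real.continuous_sqrt.comp_continuousOn
      apply ContinuousOn.div
      · exact (continuous_const.mul (continuous_const.sub continuous_id)).continuousOn
      · exact (continuous_const.add continuous_id).continuousOn
      · intro x hx
        have := hx.1
        intro h0; linarith [this, hagt]
    · exact ((continuous_const.sub continuous_id).pow 2).continuousOn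
  rcases lt_or_gt_of_ne hne with hlt | hgt
  · have hiv := intermediate_value_Icc' (le_of_lt hz0lt) (hcont z0 θ (by linarith))
    have hmem : μ2 ∈ Set.Icc (phiF θ C θ) (phiF θ C z0) := by
      rw [phiF_theta, hphiz0]; exact ⟨hμ2.le, hlt.le⟩
    obtain ⟨zb, ⟨hzb1, hzb2⟩, hzbeq⟩ := hiv hmem
    have hne1 : zb ≠ z0 := by
      intro h; rw [h, hphiz0] at hzbeq; exact hne hzbeq.symm
    have hne2 : zb ≠ θ := by
      intro h; rw [h, phiF_theta] at hzbeq; linarith [hμ2, hzbeq]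
    have hzgt : z0 < zb := lt_of_le_of_ne hzb1 (Ne.symm hne1)
    have hzlt : zb < θ := lt_of_le_of_ne hzb2 hne2
    have hbr : θ^2 - zb^2 < C/(4*θ^2) := by nlinarith [hz0sq, hz0pos, hzgt]
    refine ⟨phiF θ C (-zb), zb, ?_⟩
    have hg := good_of_branch hθ hC (by linarith : -θ < zb) hzlt hbr
      (by rw [hzbeq]; exact hμ2)
    rwa [hzbeq] at hg
  · obtain ⟨ε, hεdef⟩ : ∃ ε', ε' = min ((θ - z0)/2) (C*θ/(μ2+4*θ^2)^2) := ⟨_, rfl⟩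
    have hεpos : 0 < ε := by rw [hεdef]; exact lt_min (by linarith) (by positivity)
    obtain ⟨a, hadef⟩ : ∃ a', a' = -θ + ε := ⟨_, rfl⟩
    have hε1 : ε ≤ (θ - z0)/2 := by rw [hεdef]; exact min_le_left _ _
    have hε2 : ε ≤ C*θ/(μ2+4*θ^2)^2 := by rw [hεdef]; exact min_le_right _ _
    have haz0 : a < -z0 := by rw [hadef]; linarith
    have hagt : -θ < a := by rw [hadef]; linarith
    have hεθ : ε < θ := by linarith
    have h1a : θ + a = ε := by rw [hadef]; ring
    have h2a : θ - a = 2*θ - ε := by rw [hadef]; ring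
    have hφa : μ2 ≤ phiF θ C a := by
      have harg : (μ2+4*θ^2)^2 ≤ C*(θ-a)/(θ+a) := by
        rw [h1a, h2a, le_div_iff₀ hεpos]
        have e3 : ε*(μ2+4*θ^2)^2 ≤ C*θ := (le_div_iff₀ (by positivity)).mp hε2
        nlinarith [hC, hεθ, e3]
      have hsqrt : μ2 + 4*θ^2 ≤ Real.sqrt (C*(θ-a)/(θ+a)) := by
        have h := Real.sqrt_le_sqrt harg
        rwa [Real.sqrt_sq (by positivity : (0:ℝ) ≤ μ2+4*θ^2)] at h
      have hθa2 : (θ-a)^2 ≤ 4*θ^2 := by rw [h2a]; nlinarith [hεpos, hεθ]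
      have hform : phiF θ C a = Real.sqrt (C*(θ-a)/(θ+a)) - (θ-a)^2 := rfl
      rw [hform]; linarith [hsqrt, hθa2]
    have hφnz0 : phiF θ C (-z0) = C/(4*θ^2) := by
      apply phiF_crit hθ hC (by linarith) (by linarith)
      rw [neg_sq]; linarith [hz0sq]
    have hiv := intermediate_value_Icc' (le_of_lt haz0) (hcont a (-z0) hagt)
    have hmem : μ2 ∈ Set.Icc (phiF θ C (-z0)) (phiF θ C a) := by
      rw [hφnz0]; exact ⟨hgt.le, hφa⟩
    obtain ⟨zb, ⟨hzb1, hzb2⟩, hzbeq⟩ := hiv hmem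
    have hne1 : zb ≠ -z0 := by
      intro h; rw [h, hφnz0] at hzbeq; exact hne hzbeq.symm
    have hzblt : zb < -z0 := lt_of_le_of_ne hzb2 hne1
    have hbr : θ^2 - zb^2 < C/(4*θ^2) := by nlinarith [hz0sq, hz0pos, hzblt]
    refine ⟨phiF θ C (-zb), zb, ?_⟩
    have hg := good_of_branch hθ hC (by linarith : -θ < zb) (by linarith : zb < θ) hbr
      (by rw [hzbeq]; exact hμ2)
    rwa [hzbeq] at hg

/-- When `m1 m2 < 4 g1 g2 θ⁴`: existence, uniqueness and monotonicity of `F̃ = (F̃1, F̃2)` away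
from `μ* = m1 m2 / (4 θ² g1 g2)`. -/
theorem Ftilde_monotone (θ r1 r2 g1 g2 κ1 κ2 m1 m2 : ℝ)
    (hθ : 0 < θ) (hg1 : 0 < g1) (hg2 : 0 < g2) (hκ1 : 0 < κ1) (hκ2 : 0 < κ2)
    (hm1 : 0 < m1) (hm2 : 0 < m2)
    (hr1 : 0 < r1 - m1)
    (hA1 : m1 * m2 < 4 * g1 * g2 * θ ^ 4) :
    ∃ F1 F2 : ℝ → ℝ,
      (∀ μ2 : ℝ, 0 < μ2 → μ2 ≠ m1 * m2 / (4 * θ ^ 2 * g1 * g2) →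
      ((0 < F1 μ2 ∧ F2 μ2 ∈ Set.Icc (-θ) θ ∧
        (∀ z : ℝ, fmin θ (F1 μ2) μ2 (F2 μ2) ≤ fmin θ (F1 μ2) μ2 z) ∧
        (∀ z : ℝ, fmin θ (F1 μ2) μ2 z = fmin θ (F1 μ2) μ2 (F2 μ2) → z = F2 μ2) ∧
        fmin θ (F1 μ2) μ2 (F2 μ2) = m1 * m2 / (g1 * g2)) ∧
       (∀ μ1 zb : ℝ, 0 < μ1 → zb ∈ Set.Icc (-θ) θ →
          (∀ z : ℝ, fmin θ μ1 μ2 zb ≤ fmin θ μ1 μ2 z) →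
          (∀ z : ℝ, fmin θ μ1 μ2 z = fmin θ μ1 μ2 zb → z = zb) →
          fmin θ μ1 μ2 zb = m1 * m2 / (g1 * g2) →
          μ1 = F1 μ2 ∧ zb = F2 μ2))) ∧
      StrictAntiOn F1 (Set.Ioo 0 (m1 * m2 / (4 * θ ^ 2 * g1 * g2))) ∧
      StrictAntiOn F1 (Set.Ioi (m1 * m2 / (4 * θ ^ 2 * g1 * g2))) ∧
      StrictAntiOn F2 (Set.Ioo 0 (m1 * m2 / (4 * θ ^ 2 * g1 * g2))) ∧
      StrictAntiOn F2 (Set.Ioi (m1 * m2 / (4 * θ ^ 2 * g1 * g2))) := by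
  have hC : 0 < m1 * m2 / (g1 * g2) := by positivity
  have hCA : m1 * m2 / (g1 * g2) < 4*θ^4 := by
    rw [div_lt_iff₀ (by positivity : (0:ℝ) < g1*g2)]
    nlinarith
  have heq : m1 * m2 / (4 * θ ^ 2 * g1 * g2) = (m1 * m2 / (g1 * g2)) / (4*θ^2) := by
    rw [div_div]
    congr 1
    ring
  rw [heq]
  have hμstpos : 0 < (m1 * m2 / (g1 * g2)) / (4*θ^2) := by positivity
  have hEx : ∀ μ2 : ℝ, ∃ p : ℝ × ℝ, 0 < μ2 → μ2 ≠ (m1 * m2 / (g1 * g2)) / (4*θ^2) →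
      Good θ (m1 * m2 / (g1 * g2)) μ2 p.1 p.2 := by
    intro μ2
    by_cases h1 : 0 < μ2
    · by_cases h2 : μ2 ≠ (m1 * m2 / (g1 * g2)) / (4*θ^2)
      · obtain ⟨μ1, zb, hg⟩ := exists_good hθ hC hCA h1 h2
        exact ⟨(μ1, zb), fun _ _ => hg⟩
      · exact ⟨(0,0), fun _ h => absurd h h2⟩
    · exact ⟨(0,0), fun h _ => absurd h h1⟩
  choose F hF using hEx
  refine ⟨fun μ2 => (F μ2).1, fun μ2 => (F μ2).2, ?_, ?_, ?_, ?_, ?_⟩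
  · intro μ2 h1 h2
    have hg := hF μ2 h1 h2
    obtain ⟨ha, hb, hc, hd, he⟩ := hg
    refine ⟨⟨ha, hb, hc, hd, he⟩, ?_⟩
    intro μ1 zb hμ1 hzb hmn hun hv
    have hg2 : Good θ (m1 * m2 / (g1 * g2)) μ2 μ1 zb := ⟨hμ1, hzb, hmn, hun, hv⟩
    exact good_unique hθ hC hCA h1 hg2 ⟨ha, hb, hc, hd, he⟩
  · intro a ha b hb hab
    have hga := hF a ha.1 (ne_of_lt ha.2)
    have hgb := hF b (lt_trans ha.1 hab) (ne_of_lt hb.2)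
    exact (good_mono hθ hC hCA ha.1 (lt_trans ha.1 hab) hab hga hgb).2
  · intro a ha b hb hab
    have ha0 : 0 < a := lt_trans hμstpos ha
    have hga := hF a ha0 (ne_of_gt ha)
    have hgb := hF b (lt_trans ha0 hab) (ne_of_gt hb)
    exact (good_mono hθ hC hCA ha0 (lt_trans ha0 hab) hab hga hgb).2
  · intro a ha b hb hab
    have hga := hF a ha.1 (ne_of_lt ha.2)
    have hgb := hF b (lt_trans ha.1 hab) (ne_of_lt hb.2)
    exact (good_mono hθ hC hCA ha.1 (lt_trans ha.1 hab) hab hga hgb).1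
  · intro a ha b hb hab
    have ha0 : 0 < a := lt_trans hμstpos ha
    have hga := hF a ha0 (ne_of_gt ha)
    have hgb := hF b (lt_trans ha0 hab) (ne_of_gt hb)
    exact (good_mono hθ hC hCA ha0 (lt_trans ha0 hab) hab hga hgb).1
end

section
/- Assume m_1 > 0, m_2 > 0, r_1 − m_1 > 0, r_2 − m_2 > 0 and m_1 m_2 < 4 g_1 g_2 θ^4. Then there exists a unique pair (N_1, N_2) of positive real numbers satisfying N_1 (R_1(−z^{D*}, N_1) − m_1) + m_2 N_2 = 0 and m_1 N_1 + N_2 (R_2(−z^{D*}, N_2) − m_2) = 0; that is, the set {−z^{D*}} admits a unique demographic equilibrium. -/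
open Real Set Filter MeasureTheory


/-- Uniqueness of the positive solution of the equilibrium system. -/
lemma eq_uniq_aux (κ1 κ2 m1 m2 a1 a2 : ℝ) (hκ1 : 0 < κ1) (hκ2 : 0 < κ2)
    (hm1 : 0 < m1) (hm2 : 0 < m2) (N1 N2 M1 M2 : ℝ)
    (hN1 : 0 < N1) (hN2 : 0 < N2) (hM1 : 0 < M1) (hM2 : 0 < M2)
    (e1 : N1 * (a1 - κ1 * N1) + m2 * N2 = 0)
    (e2 : m1 * N1 + N2 * (a2 - κ2 * N2) = 0)
    (f1 : M1 * (a1 - κ1 * M1) + m2 * M2 = 0)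
    (f2 : m1 * M1 + M2 * (a2 - κ2 * M2) = 0) :
    N1 = M1 ∧ N2 = M2 := by
  have hu : m2 * N2 = N1 * (κ1 * N1 - a1) := by linear_combination e1
  have hv : m1 * N1 = N2 * (κ2 * N2 - a2) := by linear_combination e2
  have hu' : m2 * M2 = M1 * (κ1 * M1 - a1) := by linear_combination f1
  have hv' : m1 * M1 = M2 * (κ2 * M2 - a2) := by linear_combination f2
  have hupos : 0 < κ1 * N1 - a1 := by nlinarith [mul_pos hm2 hN2]
  have hu'pos : 0 < κ1 * M1 - a1 := by nlinarith [mul_pos hm2 hM2]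
  have hvpos : 0 < κ2 * N2 - a2 := by nlinarith [mul_pos hm1 hN1]
  have hv'pos : 0 < κ2 * M2 - a2 := by nlinarith [mul_pos hm1 hM1]
  have huv : (κ1 * N1 - a1) * (κ2 * N2 - a2) = m1 * m2 := by
    have h1 : ((κ1 * N1 - a1) * (κ2 * N2 - a2)) * (N1 * N2) = (m1 * m2) * (N1 * N2) := by
      linear_combination (-(N2 * (κ2 * N2 - a2))) * hu - (m2 * N2) * hv
    exact mul_right_cancel₀ (ne_of_gt (mul_pos hN1 hN2)) h1
  have huv' : (κ1 * M1 - a1) * (κ2 * M2 - a2) = m1 * m2 := by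
    have h1 : ((κ1 * M1 - a1) * (κ2 * M2 - a2)) * (M1 * M2) = (m1 * m2) * (M1 * M2) := by
      linear_combination (-(M2 * (κ2 * M2 - a2))) * hu' - (m2 * M2) * hv'
    exact mul_right_cancel₀ (ne_of_gt (mul_pos hM1 hM2)) h1
  have h11 : N1 = M1 := by
    rcases lt_trichotomy N1 M1 with h | h | h
    · exfalso
      have hN2M2 : N2 < M2 := by
        nlinarith [mul_pos (sub_pos.2 h) hu'pos, mul_pos hN1 (mul_pos hκ1 (sub_pos.2 h))]
      nlinarith [mul_pos (mul_pos hκ2 hu'pos) (sub_pos.2 hN2M2),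
        mul_pos (mul_pos hκ1 hvpos) (sub_pos.2 h)]
    · exact h
    · exfalso
      have hN2M2 : M2 < N2 := by
        nlinarith [mul_pos (sub_pos.2 h) hupos, mul_pos hM1 (mul_pos hκ1 (sub_pos.2 h))]
      nlinarith [mul_pos (mul_pos hκ2 hupos) (sub_pos.2 hN2M2),
        mul_pos (mul_pos hκ1 hv'pos) (sub_pos.2 h)]
  refine ⟨h11, ?_⟩
  have : m2 * N2 = m2 * M2 := by rw [hu, hu', h11]
  exact mul_left_cancel₀ (ne_of_gt hm2) this

open Set

lemma eq_exist_aux (κ1 κ2 m1 m2 a1 a2 : ℝ) (hκ1 : 0 < κ1) (hκ2 : 0 < κ2)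
    (hm1 : 0 < m1) (hm2 : 0 < m2) (hA : a1 ≤ 0 → a1 * a2 < m1 * m2) :
    ∃ N1 N2 : ℝ, 0 < N1 ∧ 0 < N2 ∧ N1 * (a1 - κ1 * N1) + m2 * N2 = 0 ∧
      m1 * N1 + N2 * (a2 - κ2 * N2) = 0 := by
  set G : ℝ → ℝ := fun t => (κ1 * t - a1) * (κ2 * (t * (κ1 * t - a1)) / m2 - a2) with hG
  have hGcont : Continuous G := by
    apply Continuous.mul <;> fun_prop
  set t0 : ℝ := max 0 (a1 / κ1) with ht0
  have hGt0 : G t0 < m1 * m2 := by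
    rcases le_or_gt a1 0 with ha | ha
    · have hd : a1 / κ1 ≤ 0 := div_nonpos_iff.2 (Or.inr ⟨ha, le_of_lt hκ1⟩)
      have h0 : t0 = 0 := max_eq_left hd
      rw [h0]
      have hG0 : G 0 = a1 * a2 := by simp [hG]
      rw [hG0]
      exact hA ha
    · have h0 : t0 = a1 / κ1 := max_eq_right (le_of_lt (div_pos ha hκ1))
      have hz : κ1 * t0 - a1 = 0 := by
        rw [h0]; field_simp; ring
      have hGv : G t0 = 0 := by rw [hG]; simp only; rw [hz]; ring
      rw [hGv]; positivity
  set T : ℝ := 1 + max 0 ((a1 + 1) / κ1) + max 0 (m2 * (m1 * m2 + a2) / κ2) with hT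
  have hx1 := le_max_left (0:ℝ) ((a1 + 1) / κ1)
  have hx2 := le_max_left (0:ℝ) (m2 * (m1 * m2 + a2) / κ2)
  have hy1 := le_max_right (0:ℝ) ((a1 + 1) / κ1)
  have hy2 := le_max_right (0:ℝ) (m2 * (m1 * m2 + a2) / κ2)
  have hT1 : (1:ℝ) ≤ T := by rw [hT]; linarith
  have hTa1 : (a1 + 1) / κ1 ≤ T := by rw [hT]; linarith
  have hTa2 : m2 * (m1 * m2 + a2) / κ2 ≤ T := by rw [hT]; linarith
  have hTpos : (0:ℝ) < T := by linarith
  have huT : 1 ≤ κ1 * T - a1 := by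
    rw [div_le_iff₀ hκ1] at hTa1; linarith
  have hvT : m1 * m2 ≤ κ2 * T / m2 - a2 := by
    have h := (div_le_iff₀ hκ2).1 hTa2
    rw [le_sub_iff_add_le, le_div_iff₀ hm2]
    linarith
  have hGT : m1 * m2 ≤ G T := by
    rw [hG]; simp only
    have hTT : T ≤ T * (κ1 * T - a1) := by
      nlinarith [mul_nonneg hTpos.le (show (0:ℝ) ≤ κ1 * T - a1 - 1 by linarith)]
    have h1 : κ2 * T / m2 ≤ κ2 * (T * (κ1 * T - a1)) / m2 := by gcongr
    have hsf : (0:ℝ) ≤ κ2 * (T * (κ1 * T - a1)) / m2 - a2 := by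
      nlinarith [mul_pos hm1 hm2]
    nlinarith [mul_nonneg (show (0:ℝ) ≤ κ1 * T - a1 - 1 by linarith) hsf]
  have ht0T : t0 ≤ T := by
    apply max_le (by linarith)
    rw [div_le_iff₀ hκ1]; rw [div_le_iff₀ hκ1] at hTa1; linarith
  obtain ⟨t, htI, htG⟩ := intermediate_value_Icc ht0T hGcont.continuousOn
    ⟨le_of_lt hGt0, hGT⟩
  have ht_ne : t ≠ t0 := by
    intro h
    have h2 : G t0 = m1 * m2 := h ▸ htG
    linarith
  have ht_gt : t0 < t := lt_of_le_of_ne htI.1 (Ne.symm ht_ne)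
  have htpos : 0 < t := lt_of_le_of_lt (le_max_left 0 (a1 / κ1)) ht_gt
  have hu : 0 < κ1 * t - a1 := by
    have h := lt_of_le_of_lt (le_max_right 0 (a1 / κ1)) ht_gt
    rw [div_lt_iff₀ hκ1] at h; linarith
  refine ⟨t, t * (κ1 * t - a1) / m2, htpos, by positivity, ?_, ?_⟩
  · field_simp; ring
  · have h := htG
    rw [hG] at h
    simp only at h
    field_simp at h ⊢
    linear_combination (-t) * h

/-- The set `{-zD}` admits a unique demographic equilibrium. -/
theorem unique_demographic_equilibrium (θ r1 r2 g1 g2 κ1 κ2 m1 m2 : ℝ)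
    (hθ : 0 < θ) (hg1 : 0 < g1) (hg2 : 0 < g2) (hκ1 : 0 < κ1) (hκ2 : 0 < κ2)
    (hm1 : 0 < m1) (hm2 : 0 < m2)
    (hr1 : 0 < r1 - m1) (hr2 : 0 < r2 - m2)
    (hA1 : m1 * m2 < 4 * g1 * g2 * θ ^ 4) :
    ∃! N : ℝ × ℝ, (0 < N.1 ∧ 0 < N.2) ∧
      N.1 * (R1 θ r1 r2 g1 g2 κ1 κ2 m1 m2 (-(zD θ r1 r2 g1 g2 κ1 κ2 m1 m2)) N.1 - m1) + m2 * N.2 = 0 ∧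
      m1 * N.1 + N.2 * (R2 θ r1 r2 g1 g2 κ1 κ2 m1 m2 (-(zD θ r1 r2 g1 g2 κ1 κ2 m1 m2)) N.2 - m2) = 0 := by
  set s : ℝ := zD θ r1 r2 g1 g2 κ1 κ2 m1 m2 with hsdef
  have hden : (0:ℝ) < 4 * θ ^ 2 * g1 * g2 := by positivity
  have harg : (0:ℝ) ≤ θ ^ 2 - m1 * m2 / (4 * θ ^ 2 * g1 * g2) := by
    rw [sub_nonneg, div_le_iff₀ hden]; nlinarith
  have hs2 : s ^ 2 = θ ^ 2 - m1 * m2 / (4 * θ ^ 2 * g1 * g2) := by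
    rw [hsdef, zD]; exact Real.sq_sqrt harg
  have hprod : g1 * (θ - s) ^ 2 * (g2 * (θ + s) ^ 2) < m1 * m2 := by
    have hsq : (θ - s) ^ 2 * (θ + s) ^ 2 = (m1 * m2 / (4 * θ ^ 2 * g1 * g2)) ^ 2 := by
      have h : (θ - s) ^ 2 * (θ + s) ^ 2 = (θ ^ 2 - s ^ 2) ^ 2 := by ring
      rw [h, hs2]; ring
    have hkey : g1 * g2 * ((m1 * m2 / (4 * θ ^ 2 * g1 * g2)) ^ 2) < m1 * m2 := by
      rw [div_pow, ← mul_div_assoc, div_lt_iff₀ (by positivity)]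
      nlinarith [mul_lt_mul_of_pos_left hA1 (mul_pos (mul_pos hg1 hg2) (mul_pos hm1 hm2)),
        (by positivity : (0:ℝ) < θ ^ 4 * g1 ^ 2 * g2 ^ 2 * (m1 * m2))]
    calc g1 * (θ - s) ^ 2 * (g2 * (θ + s) ^ 2)
        = g1 * g2 * ((θ - s) ^ 2 * (θ + s) ^ 2) := by ring
      _ = g1 * g2 * ((m1 * m2 / (4 * θ ^ 2 * g1 * g2)) ^ 2) := by rw [hsq]
      _ < m1 * m2 := hkey
  have hAcond : r1 - g1 * (θ - s) ^ 2 - m1 ≤ 0 →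
      (r1 - g1 * (θ - s) ^ 2 - m1) * (r2 - g2 * (θ + s) ^ 2 - m2) < m1 * m2 := by
    intro ha1
    rcases le_or_gt 0 (r2 - g2 * (θ + s) ^ 2 - m2) with ha2 | ha2
    · nlinarith [mul_pos hm1 hm2, mul_nonneg (neg_nonneg.2 ha1) ha2]
    · nlinarith [hprod, mul_nonneg (show (0:ℝ) ≤ g1 * (θ - s) ^ 2 - (r1 - m1) by linarith)
        hr2.le, mul_nonneg hr1.le (show (0:ℝ) ≤ g2 * (θ + s) ^ 2 by positivity)]
  obtain ⟨N1, N2, hN1, hN2, e1, e2⟩ := eq_exist_aux κ1 κ2 m1 m2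
    (r1 - g1 * (θ - s) ^ 2 - m1) (r2 - g2 * (θ + s) ^ 2 - m2) hκ1 hκ2 hm1 hm2 hAcond
  refine ⟨(N1, N2), ⟨⟨hN1, hN2⟩, ?_, ?_⟩, ?_⟩
  · simp only [R1]; linear_combination e1
  · simp only [R2]; linear_combination e2
  · rintro ⟨M1, M2⟩ ⟨⟨hM1, hM2⟩, f1, f2⟩
    simp only [R1, R2] at f1 f2
    have f1' : M1 * ((r1 - g1 * (θ - s) ^ 2 - m1) - κ1 * M1) + m2 * M2 = 0 := by
      linear_combination f1
    have f2' : m1 * M1 + M2 * ((r2 - g2 * (θ + s) ^ 2 - m2) - κ2 * M2) = 0 := by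
      linear_combination f2
    obtain ⟨h1, h2⟩ := eq_uniq_aux κ1 κ2 m1 m2 _ _ hκ1 hκ2 hm1 hm2 M1 M2 N1 N2
      hM1 hM2 hN1 hN2 f1' f2' e1 e2
    exact Prod.ext h1 h2
end

section
/- Assume m_1 > 0 and m_2 > 0. Let N_1, N_2 ∈ ℝ be such that W(z, N_1, N_2) ≤ 0 for all z ∈ ℝ. Then the set {z ∈ ℝ : W(z, N_1, N_2) = 0} contains at most two elements. -/
open Real Set Filter MeasureTheory

/-- If the effective fitness is nonpositive everywhere then its zero set contains at most
two points. -/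
theorem W_zero_set_at_most_two (θ r1 r2 g1 g2 κ1 κ2 m1 m2 : ℝ)
    (hθ : 0 < θ) (hg1 : 0 < g1) (hg2 : 0 < g2) (hκ1 : 0 < κ1) (hκ2 : 0 < κ2)
    (hm1 : 0 < m1) (hm2 : 0 < m2)
    (N1 N2 : ℝ)
    (hW : ∀ z : ℝ, W θ r1 r2 g1 g2 κ1 κ2 m1 m2 z N1 N2 ≤ 0) :
    ({z : ℝ | W θ r1 r2 g1 g2 κ1 κ2 m1 m2 z N1 N2 = 0} : Set ℝ).encard ≤ 2 := by
  classical
  set a1 : ℝ := r1 - κ1 * N1 - m1 with ha1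
  set a2 : ℝ := r2 - κ2 * N2 - m2 with ha2
  set P : Polynomial ℝ :=
    (Polynomial.C a1 - Polynomial.C g1 * (Polynomial.X + Polynomial.C θ) ^ 2) *
      (Polynomial.C a2 - Polynomial.C g2 * (Polynomial.X - Polynomial.C θ) ^ 2) -
      Polynomial.C (m1 * m2) with hP
  have hev : ∀ z : ℝ, P.eval z =
      (a1 - g1 * (z + θ) ^ 2) * (a2 - g2 * (z - θ) ^ 2) - m1 * m2 := by
    intro z; simp [hP]
  have hdeg : P.natDegree = 4 := by
    rw [hP]; compute_degree!
    exact ⟨hg1.ne', hg2.ne'⟩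
  have hPne : P ≠ 0 := fun h => by simp [h] at hdeg
  -- abbreviations for the two branch fitnesses
  have key : ∀ z : ℝ,
      0 ≤ P.eval z ∧ (W θ r1 r2 g1 g2 κ1 κ2 m1 m2 z N1 N2 = 0 → P.eval z = 0) := by
    intro z
    set A : ℝ := a1 - g1 * (z + θ) ^ 2 with hA
    set B : ℝ := a2 - g2 * (z - θ) ^ 2 with hB
    have hD : (0:ℝ) ≤ (A - B) ^ 2 + 4 * m1 * m2 := by positivity
    have hseq : Real.sqrt ((A - B) ^ 2 + 4 * m1 * m2) ^ 2 = (A - B) ^ 2 + 4 * m1 * m2 :=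
      Real.sq_sqrt hD
    have hsn : 0 ≤ Real.sqrt ((A - B) ^ 2 + 4 * m1 * m2) := Real.sqrt_nonneg _
    have e1 : R1 θ r1 r2 g1 g2 κ1 κ2 m1 m2 z N1 - R2 θ r1 r2 g1 g2 κ1 κ2 m1 m2 z N2
        - m1 + m2 = A - B := by
      rw [R1, R2, hA, hB, ha1, ha2]; ring
    have e2 : R1 θ r1 r2 g1 g2 κ1 κ2 m1 m2 z N1 + R2 θ r1 r2 g1 g2 κ1 κ2 m1 m2 z N2
        - m1 - m2 = A + B := by
      rw [R1, R2, hA, hB, ha1, ha2]; ring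
    have hWz : W θ r1 r2 g1 g2 κ1 κ2 m1 m2 z N1 N2 =
        (A + B + Real.sqrt ((A - B) ^ 2 + 4 * m1 * m2)) / 2 := by
      rw [W, e1, e2]
    have hW' := hW z
    rw [hWz] at hW'
    have h1 : 0 ≤ -(A + B + Real.sqrt ((A - B) ^ 2 + 4 * m1 * m2)) := by linarith
    constructor
    · have h2 : 0 ≤ -(A + B - Real.sqrt ((A - B) ^ 2 + 4 * m1 * m2)) := by linarith
      rw [hev z, ← hA, ← hB]
      nlinarith [mul_nonneg h1 h2, hseq]
    · intro h0
      rw [hWz] at h0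
      have hsum : Real.sqrt ((A - B) ^ 2 + 4 * m1 * m2) = -(A + B) := by linarith
      have hkey : (A - B) ^ 2 + 4 * m1 * m2 = (A + B) ^ 2 := by
        rw [← hseq, hsum]; ring
      rw [hev z, ← hA, ← hB]
      linear_combination (-1/4 : ℝ) * hkey
  -- the zero set is contained in the zero set of P
  have hsub : ({z : ℝ | W θ r1 r2 g1 g2 κ1 κ2 m1 m2 z N1 N2 = 0} : Set ℝ) ⊆
      {z : ℝ | P.eval z = 0} := fun z hz => (key z).2 hz
  refine le_trans (Set.encard_le_encard hsub) ?_
  -- every zero of P is a root of multiplicity ≥ 2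
  have hmul : ∀ z : ℝ, P.eval z = 0 → (Polynomial.X - Polynomial.C z) ^ 2 ∣ P := by
    intro z hz
    have h2 : 1 < P.rootMultiplicity z := by
      rw [Polynomial.one_lt_rootMultiplicity_iff_isRoot hPne]
      refine ⟨hz, ?_⟩
      have hlm : IsLocalMin (fun x => P.eval x) z :=
        Filter.Eventually.of_forall fun x => by
          simpa [hz] using (key x).1
      have hd := hlm.deriv_eq_zero
      rwa [Polynomial.deriv] at hd
    calc (Polynomial.X - Polynomial.C z) ^ 2 ∣ (Polynomial.X - Polynomial.C z) ^ P.rootMultiplicity z :=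
          pow_dvd_pow _ h2
      _ ∣ P := P.pow_rootMultiplicity_dvd z
  -- conclude: at most two such points
  by_contra hcon
  push_neg at hcon
  obtain ⟨t, hts, ht3⟩ := Set.exists_subset_encard_eq (Order.add_one_le_of_lt hcon)
  rw [show ((2:ℕ∞) + 1) = 3 by rfl] at ht3
  obtain ⟨a, b, c, hab, hac, hbc, rfl⟩ := Set.encard_eq_three.mp ht3
  have ha : P.eval a = 0 := hts (by simp)
  have hb : P.eval b = 0 := hts (by simp)
  have hc : P.eval c = 0 := hts (by simp)
  have cab : IsCoprime (Polynomial.X - Polynomial.C a) (Polynomial.X - Polynomial.C b) :=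
    Polynomial.isCoprime_X_sub_C_of_isUnit_sub (sub_ne_zero.mpr hab).isUnit
  have cac : IsCoprime (Polynomial.X - Polynomial.C a) (Polynomial.X - Polynomial.C c) :=
    Polynomial.isCoprime_X_sub_C_of_isUnit_sub (sub_ne_zero.mpr hac).isUnit
  have cbc : IsCoprime (Polynomial.X - Polynomial.C b) (Polynomial.X - Polynomial.C c) :=
    Polynomial.isCoprime_X_sub_C_of_isUnit_sub (sub_ne_zero.mpr hbc).isUnit
  have dab : (Polynomial.X - Polynomial.C a) ^ 2 * (Polynomial.X - Polynomial.C b) ^ 2 ∣ P :=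
    (cab.pow).mul_dvd (hmul a ha) (hmul b hb)
  have dabc : (Polynomial.X - Polynomial.C a) ^ 2 * (Polynomial.X - Polynomial.C b) ^ 2 *
      (Polynomial.X - Polynomial.C c) ^ 2 ∣ P :=
    (cac.pow.mul_left cbc.pow).mul_dvd dab (hmul c hc)
  have hle := Polynomial.natDegree_le_of_dvd dabc hPne
  have hne : ∀ x : ℝ, ((Polynomial.X - Polynomial.C x) ^ 2 : Polynomial ℝ) ≠ 0 :=
    fun x => pow_ne_zero _ (Polynomial.X_sub_C_ne_zero x)
  rw [Polynomial.natDegree_mul (mul_ne_zero (hne a) (hne b)) (hne c),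
    Polynomial.natDegree_mul (hne a) (hne b), hdeg] at hle
  simp only [Polynomial.natDegree_pow, Polynomial.natDegree_X_sub_C] at hle
  omega
end

section
/- Assume m_1 > 0, m_2 > 0 and m_1 m_2 < 4 g_1 g_2 θ^4. Then W(z, N_1^{D*}, N_2^{D*}) ≤ 0 for every z ∈ ℝ, with equality if and only if z = z^{D*} or z = −z^{D*}. -/
open Real Set Filter MeasureTheory

set_option maxHeartbeats 1000000 in
/-- At the dimorphic equilibrium sizes, the effective fitness is nonpositive, vanishing
exactly at `±zD`. -/
theorem W_dimorphic_nonpos (θ r1 r2 g1 g2 κ1 κ2 m1 m2 : ℝ)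
    (hθ : 0 < θ) (hg1 : 0 < g1) (hg2 : 0 < g2) (hκ1 : 0 < κ1) (hκ2 : 0 < κ2)
    (hm1 : 0 < m1) (hm2 : 0 < m2)
    (hA1 : m1 * m2 < 4 * g1 * g2 * θ ^ 4) :
    (∀ z : ℝ, W θ r1 r2 g1 g2 κ1 κ2 m1 m2 z (N1D θ r1 r2 g1 g2 κ1 κ2 m1 m2) (N2D θ r1 r2 g1 g2 κ1 κ2 m1 m2) ≤ 0) ∧
    (∀ z : ℝ, W θ r1 r2 g1 g2 κ1 κ2 m1 m2 z (N1D θ r1 r2 g1 g2 κ1 κ2 m1 m2) (N2D θ r1 r2 g1 g2 κ1 κ2 m1 m2) = 0 ↔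
      z = zD θ r1 r2 g1 g2 κ1 κ2 m1 m2 ∨ z = -(zD θ r1 r2 g1 g2 κ1 κ2 m1 m2)) := by
  have hθ2 : (0:ℝ) < θ ^ 2 := by positivity
  have hD : 0 ≤ θ ^ 2 - m1 * m2 / (4 * θ ^ 2 * g1 * g2) := by
    rw [sub_nonneg, div_le_iff₀ (by positivity)]
    nlinarith
  have hzd_sq : (zD θ r1 r2 g1 g2 κ1 κ2 m1 m2) ^ 2 = θ ^ 2 - m1 * m2 / (4 * θ ^ 2 * g1 * g2) := by
    rw [zD]; exact Real.sq_sqrt hD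
  have hzd_nonneg : 0 ≤ zD θ r1 r2 g1 g2 κ1 κ2 m1 m2 := Real.sqrt_nonneg _
  -- main per-z facts
  have main : ∀ z : ℝ,
      W θ r1 r2 g1 g2 κ1 κ2 m1 m2 z (N1D θ r1 r2 g1 g2 κ1 κ2 m1 m2) (N2D θ r1 r2 g1 g2 κ1 κ2 m1 m2) ≤ 0 ∧
      (W θ r1 r2 g1 g2 κ1 κ2 m1 m2 z (N1D θ r1 r2 g1 g2 κ1 κ2 m1 m2) (N2D θ r1 r2 g1 g2 κ1 κ2 m1 m2) = 0 ↔
        z = zD θ r1 r2 g1 g2 κ1 κ2 m1 m2 ∨ z = -(zD θ r1 r2 g1 g2 κ1 κ2 m1 m2)) := by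
    intro z
    set a : ℝ := g1 * (z + θ) ^ 2 + m1 * m2 / (4 * θ ^ 2 * g2) with ha
    set b : ℝ := g2 * (z - θ) ^ 2 + m1 * m2 / (4 * θ ^ 2 * g1) with hb
    have ha_pos : 0 < a := by positivity
    have hb_pos : 0 < b := by positivity
    have hR1 : R1 θ r1 r2 g1 g2 κ1 κ2 m1 m2 z (N1D θ r1 r2 g1 g2 κ1 κ2 m1 m2) = -a + m1 := by
      rw [R1, N1D, ha]; field_simp; ring
    have hR2 : R2 θ r1 r2 g1 g2 κ1 κ2 m1 m2 z (N2D θ r1 r2 g1 g2 κ1 κ2 m1 m2) = -b + m2 := by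
      rw [R2, N2D, hb]; field_simp; ring
    have hX : ((-a + m1) - (-b + m2) - m1 + m2) ^ 2 + 4 * m1 * m2 = (b - a) ^ 2 + 4 * m1 * m2 := by
      ring
    have hW : W θ r1 r2 g1 g2 κ1 κ2 m1 m2 z (N1D θ r1 r2 g1 g2 κ1 κ2 m1 m2) (N2D θ r1 r2 g1 g2 κ1 κ2 m1 m2)
        = (-(a + b) + Real.sqrt ((b - a) ^ 2 + 4 * m1 * m2)) / 2 := by
      rw [W, hR1, hR2, hX]; ring_nf
    -- key identity
    have hkey : g1 * g2 * (a * b - m1 * m2) = (g1 * g2 * (z ^ 2 - θ ^ 2) + m1 * m2 / (4 * θ ^ 2)) ^ 2 := by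
      rw [ha, hb]; field_simp; ring
    clear_value a b
    have hab : m1 * m2 ≤ a * b := by
      have h0 : 0 ≤ g1 * g2 * (a * b - m1 * m2) := by
        rw [hkey]; positivity
      have h1 := (mul_nonneg_iff_of_pos_left (mul_pos hg1 hg2)).mp h0
      linarith
    have hXnonneg : (0:ℝ) ≤ (b - a) ^ 2 + 4 * m1 * m2 := by positivity
    have hle : (b - a) ^ 2 + 4 * m1 * m2 ≤ (a + b) ^ 2 := by nlinarith
    have hsqrt_le : Real.sqrt ((b - a) ^ 2 + 4 * m1 * m2) ≤ a + b := by
      calc Real.sqrt ((b - a) ^ 2 + 4 * m1 * m2) ≤ Real.sqrt ((a + b) ^ 2) :=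
            Real.sqrt_le_sqrt hle
        _ = a + b := Real.sqrt_sq (by linarith)
    constructor
    · rw [hW]; linarith
    · rw [hW]
      have h1 : (-(a + b) + Real.sqrt ((b - a) ^ 2 + 4 * m1 * m2)) / 2 = 0 ↔
          Real.sqrt ((b - a) ^ 2 + 4 * m1 * m2) = a + b := by
        constructor <;> intro h <;> linarith
      rw [h1]
      have h2 : Real.sqrt ((b - a) ^ 2 + 4 * m1 * m2) = a + b ↔
          (b - a) ^ 2 + 4 * m1 * m2 = (a + b) ^ 2 := by
        constructor
        · intro h
          have := Real.sq_sqrt hXnonneg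
          rw [h] at this; linarith [this]
        · intro h
          rw [h, Real.sqrt_sq (by linarith : (0:ℝ) ≤ a + b)]
      rw [h2]
      have h3 : (b - a) ^ 2 + 4 * m1 * m2 = (a + b) ^ 2 ↔ a * b = m1 * m2 := by
        constructor <;> intro h <;> nlinarith
      rw [h3]
      have h4 : a * b = m1 * m2 ↔ g1 * g2 * (z ^ 2 - θ ^ 2) + m1 * m2 / (4 * θ ^ 2) = 0 := by
        constructor
        · intro h
          have h5 : (g1 * g2 * (z ^ 2 - θ ^ 2) + m1 * m2 / (4 * θ ^ 2)) ^ 2 = 0 := by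
            rw [← hkey, h]; ring
          exact pow_eq_zero_iff (by norm_num) |>.mp h5
        · intro h
          have := hkey
          rw [h] at this
          have hgg : (0:ℝ) < g1 * g2 := mul_pos hg1 hg2
          nlinarith [this]
      rw [h4]
      have h6 : g1 * g2 * (z ^ 2 - θ ^ 2) + m1 * m2 / (4 * θ ^ 2) = 0 ↔
          z ^ 2 = (zD θ r1 r2 g1 g2 κ1 κ2 m1 m2) ^ 2 := by
        rw [hzd_sq]
        have hgg : g1 * g2 ≠ 0 := ne_of_gt (mul_pos hg1 hg2)
        have hred : g1 * g2 * (m1 * m2 / (4 * θ ^ 2 * g1 * g2)) = m1 * m2 / (4 * θ ^ 2) := by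
          field_simp
        constructor <;> intro h
        · apply mul_left_cancel₀ hgg
          rw [mul_sub, hred]
          linarith
        · have h2' : g1 * g2 * z ^ 2 = g1 * g2 * θ ^ 2 - m1 * m2 / (4 * θ ^ 2) := by
            rw [h, mul_sub, hred]
          linarith
      rw [h6]
      constructor
      · intro h
        have h7 : (z - zD θ r1 r2 g1 g2 κ1 κ2 m1 m2) * (z + zD θ r1 r2 g1 g2 κ1 κ2 m1 m2) = 0 := by
          linear_combination h
        rcases mul_eq_zero.mp h7 with h' | h'
        · exact Or.inl (by linarith)
        · exact Or.inr (by linarith)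
      · rintro (h | h) <;> rw [h] <;> ring
  exact ⟨fun z => (main z).1, fun z => (main z).2⟩
end

section
/- Assume m_1 > 0, m_2 > 0 and m_1 m_2 < 4 g_1 g_2 θ^4. Set Δ = m_1 m_2 − (R_1(−z^{D*}, N_1^{D*}) − m_1)(R_2(z^{D*}, N_2^{D*}) − m_2). Then Δ > 0, and the numbers (ν_{I,1}, ν_{I,2}) = [(m_1 N_1^{D*} + (R_2(z^{D*}, N_2^{D*}) − m_2) N_2^{D*})/Δ]·(m_2, −R_1(−z^{D*}, N_1^{D*}) + m_1) and (ν_{II,1}, ν_{II,2}) = [(m_2 N_2^{D*} + (R_1(−z^{D*}, N_1^{D*}) − m_1) N_1^{D*})/Δ]·(−R_2(z^{D*}, N_2^{D*}) + m_2, m_1) form the unique solution of the system: A(−z^{D*}; N_1^{D*}, N_2^{D*})·(ν_{I,1}, ν_{I,2})ᵀ = 0, A(z^{D*}; N_1^{D*}, N_2^{D*})·(ν_{II,1}, ν_{II,2})ᵀ = 0, ν_{I,1} + ν_{II,1} = N_1^{D*}, ν_{I,2} + ν_{II,2} = N_2^{D*}. Moreover all four numbers ν_{I,1}, ν_{I,2},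 ν_{II,1}, ν_{II,2} are positive if and only if both 0 < m_2 N_2^{D*} + (R_1(−z^{D*}, N_1^{D*}) − m_1) N_1^{D*} and 0 < m_1 N_1^{D*} + (R_2(z^{D*}, N_2^{D*}) − m_2) N_2^{D*}. -/
open Real Set Filter MeasureTheory

/-- The linear system determining the weights of the dimorphic demographic equilibrium. -/
def DimSys (θ r1 r2 g1 g2 κ1 κ2 m1 m2 a b c d : ℝ) : Prop :=
  (R1 θ r1 r2 g1 g2 κ1 κ2 m1 m2 (-(zD θ r1 r2 g1 g2 κ1 κ2 m1 m2)) (N1D θ r1 r2 g1 g2 κ1 κ2 m1 m2) - m1) * a + m2 * b = 0 ∧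
  m1 * a + (R2 θ r1 r2 g1 g2 κ1 κ2 m1 m2 (-(zD θ r1 r2 g1 g2 κ1 κ2 m1 m2)) (N2D θ r1 r2 g1 g2 κ1 κ2 m1 m2) - m2) * b = 0 ∧
  (R1 θ r1 r2 g1 g2 κ1 κ2 m1 m2 (zD θ r1 r2 g1 g2 κ1 κ2 m1 m2) (N1D θ r1 r2 g1 g2 κ1 κ2 m1 m2) - m1) * c + m2 * d = 0 ∧
  m1 * c + (R2 θ r1 r2 g1 g2 κ1 κ2 m1 m2 (zD θ r1 r2 g1 g2 κ1 κ2 m1 m2) (N2D θ r1 r2 g1 g2 κ1 κ2 m1 m2) - m2) * d = 0 ∧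
  a + c = N1D θ r1 r2 g1 g2 κ1 κ2 m1 m2 ∧ b + d = N2D θ r1 r2 g1 g2 κ1 κ2 m1 m2

noncomputable def Δdim (θ r1 r2 g1 g2 κ1 κ2 m1 m2 : ℝ) : ℝ :=
  m1 * m2 - (R1 θ r1 r2 g1 g2 κ1 κ2 m1 m2 (-(zD θ r1 r2 g1 g2 κ1 κ2 m1 m2)) (N1D θ r1 r2 g1 g2 κ1 κ2 m1 m2) - m1) *
    (R2 θ r1 r2 g1 g2 κ1 κ2 m1 m2 (zD θ r1 r2 g1 g2 κ1 κ2 m1 m2) (N2D θ r1 r2 g1 g2 κ1 κ2 m1 m2) - m2)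

theorem aux_dim (A1 A2 B1 B2 n1 n2 m1 m2 Δ q2v q3v : ℝ)
    (hm2 : m2 ≠ 0) (hΔ0 : Δ ≠ 0) (hAB : A1 - B1 ≠ 0)
    (hd1 : (A1 - m1) * (A2 - m2) = m1 * m2)
    (hd2 : (B1 - m1) * (B2 - m2) = m1 * m2)
    (hΔ : Δ = m1 * m2 - (A1 - m1) * (B2 - m2))
    (hq3 : q3v = m1 * n1 + (B2 - m2) * n2)
    (hq2 : q2v = m2 * n2 + (A1 - m1) * n1) :
    ((A1 - m1) * (q3v / Δ * m2) + m2 * (q3v / Δ * (-A1 + m1)) = 0 ∧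
     m1 * (q3v / Δ * m2) + (A2 - m2) * (q3v / Δ * (-A1 + m1)) = 0 ∧
     (B1 - m1) * (q2v / Δ * (-B2 + m2)) + m2 * (q2v / Δ * m1) = 0 ∧
     m1 * (q2v / Δ * (-B2 + m2)) + (B2 - m2) * (q2v / Δ * m1) = 0 ∧
     q3v / Δ * m2 + q2v / Δ * (-B2 + m2) = n1 ∧
     q3v / Δ * (-A1 + m1) + q2v / Δ * m1 = n2) ∧
    ∀ a b c d : ℝ,
      ((A1 - m1) * a + m2 * b = 0 ∧ m1 * a + (A2 - m2) * b = 0 ∧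
       (B1 - m1) * c + m2 * d = 0 ∧ m1 * c + (B2 - m2) * d = 0 ∧
       a + c = n1 ∧ b + d = n2) →
      a = q3v / Δ * m2 ∧ b = q3v / Δ * (-A1 + m1) ∧
      c = q2v / Δ * (-B2 + m2) ∧ d = q2v / Δ * m1 := by
  have ex1 : (A1 - m1) * (q3v / Δ * m2) + m2 * (q3v / Δ * (-A1 + m1)) = 0 := by ring
  have ex2 : m1 * (q3v / Δ * m2) + (A2 - m2) * (q3v / Δ * (-A1 + m1)) = 0 := by
    field_simp
    linear_combination (-q3v) * hd1
  have ex3 : (B1 - m1) * (q2v / Δ * (-B2 + m2)) + m2 * (q2v / Δ * m1) = 0 := by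
    field_simp
    linear_combination (-q2v) * hd2
  have ex4 : m1 * (q2v / Δ * (-B2 + m2)) + (B2 - m2) * (q2v / Δ * m1) = 0 := by ring
  have ex5 : q3v / Δ * m2 + q2v / Δ * (-B2 + m2) = n1 := by
    field_simp
    linear_combination m2 * hq3 + (-B2 + m2) * hq2 - n1 * hΔ
  have ex6 : q3v / Δ * (-A1 + m1) + q2v / Δ * m1 = n2 := by
    field_simp
    linear_combination (-A1 + m1) * hq3 + m1 * hq2 - n2 * hΔ
  refine ⟨⟨ex1, ex2, ex3, ex4, ex5, ex6⟩, ?_⟩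
  rintro a b c d ⟨h1, h2, h3, h4, h5, h6⟩
  have key1 : (A1 - B1) * a = -((B1 - m1) * n1) - m2 * n2 := by
    linear_combination h1 + h3 - (B1 - m1) * h5 - m2 * h6
  have key2 : (A1 - B1) * (q3v / Δ * m2) = -((B1 - m1) * n1) - m2 * n2 := by
    linear_combination ex1 + ex3 - (B1 - m1) * ex5 - m2 * ex6
  have ha : a = q3v / Δ * m2 := mul_left_cancel₀ hAB (key1.trans key2.symm)
  have hb : b = q3v / Δ * (-A1 + m1) := by
    have h : m2 * b = m2 * (q3v / Δ * (-A1 + m1)) := by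
      linear_combination h1 - ex1 - (A1 - m1) * ha
    exact mul_left_cancel₀ hm2 h
  have hc : c = q2v / Δ * (-B2 + m2) := by linear_combination h5 - ex5 - ha
  have hd : d = q2v / Δ * m1 := by linear_combination h6 - ex6 - hb
  exact ⟨ha, hb, hc, hd⟩

/-- The explicit weights `ν` are the unique solution of the dimorphic equilibrium system, and
they are all positive iff conditions (A2) and (A3) hold. -/
theorem dimorphic_weights (θ r1 r2 g1 g2 κ1 κ2 m1 m2 : ℝ)
    (hθ : 0 < θ) (hg1 : 0 < g1) (hg2 : 0 < g2) (hκ1 : 0 < κ1) (hκ2 : 0 < κ2)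
    (hm1 : 0 < m1) (hm2 : 0 < m2)
    (hA1 : m1 * m2 < 4 * g1 * g2 * θ ^ 4) :
    0 < Δdim θ r1 r2 g1 g2 κ1 κ2 m1 m2 ∧
    DimSys θ r1 r2 g1 g2 κ1 κ2 m1 m2
      ((q3 θ r1 r2 g1 g2 κ1 κ2 m1 m2 / Δdim θ r1 r2 g1 g2 κ1 κ2 m1 m2) * m2)
      ((q3 θ r1 r2 g1 g2 κ1 κ2 m1 m2 / Δdim θ r1 r2 g1 g2 κ1 κ2 m1 m2) * (-(R1 θ r1 r2 g1 g2 κ1 κ2 m1 m2 (-(zD θ r1 r2 g1 g2 κ1 κ2 m1 m2)) (N1D θ r1 r2 g1 g2 κ1 κ2 m1 m2)) + m1))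
      ((q2 θ r1 r2 g1 g2 κ1 κ2 m1 m2 / Δdim θ r1 r2 g1 g2 κ1 κ2 m1 m2) * (-(R2 θ r1 r2 g1 g2 κ1 κ2 m1 m2 (zD θ r1 r2 g1 g2 κ1 κ2 m1 m2) (N2D θ r1 r2 g1 g2 κ1 κ2 m1 m2)) + m2))
      ((q2 θ r1 r2 g1 g2 κ1 κ2 m1 m2 / Δdim θ r1 r2 g1 g2 κ1 κ2 m1 m2) * m1) ∧
    (∀ a b c d : ℝ, DimSys θ r1 r2 g1 g2 κ1 κ2 m1 m2 a b c d →
      a = (q3 θ r1 r2 g1 g2 κ1 κ2 m1 m2 / Δdim θ r1 r2 g1 g2 κ1 κ2 m1 m2) * m2 ∧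
      b = (q3 θ r1 r2 g1 g2 κ1 κ2 m1 m2 / Δdim θ r1 r2 g1 g2 κ1 κ2 m1 m2) * (-(R1 θ r1 r2 g1 g2 κ1 κ2 m1 m2 (-(zD θ r1 r2 g1 g2 κ1 κ2 m1 m2)) (N1D θ r1 r2 g1 g2 κ1 κ2 m1 m2)) + m1) ∧
      c = (q2 θ r1 r2 g1 g2 κ1 κ2 m1 m2 / Δdim θ r1 r2 g1 g2 κ1 κ2 m1 m2) * (-(R2 θ r1 r2 g1 g2 κ1 κ2 m1 m2 (zD θ r1 r2 g1 g2 κ1 κ2 m1 m2) (N2D θ r1 r2 g1 g2 κ1 κ2 m1 m2)) + m2) ∧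
      d = (q2 θ r1 r2 g1 g2 κ1 κ2 m1 m2 / Δdim θ r1 r2 g1 g2 κ1 κ2 m1 m2) * m1) ∧
    ((0 < (q3 θ r1 r2 g1 g2 κ1 κ2 m1 m2 / Δdim θ r1 r2 g1 g2 κ1 κ2 m1 m2) * m2 ∧
      0 < (q3 θ r1 r2 g1 g2 κ1 κ2 m1 m2 / Δdim θ r1 r2 g1 g2 κ1 κ2 m1 m2) * (-(R1 θ r1 r2 g1 g2 κ1 κ2 m1 m2 (-(zD θ r1 r2 g1 g2 κ1 κ2 m1 m2)) (N1D θ r1 r2 g1 g2 κ1 κ2 m1 m2)) + m1) ∧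
      0 < (q2 θ r1 r2 g1 g2 κ1 κ2 m1 m2 / Δdim θ r1 r2 g1 g2 κ1 κ2 m1 m2) * (-(R2 θ r1 r2 g1 g2 κ1 κ2 m1 m2 (zD θ r1 r2 g1 g2 κ1 κ2 m1 m2) (N2D θ r1 r2 g1 g2 κ1 κ2 m1 m2)) + m2) ∧
      0 < (q2 θ r1 r2 g1 g2 κ1 κ2 m1 m2 / Δdim θ r1 r2 g1 g2 κ1 κ2 m1 m2) * m1) ↔
      (0 < q2 θ r1 r2 g1 g2 κ1 κ2 m1 m2 ∧ 0 < q3 θ r1 r2 g1 g2 κ1 κ2 m1 m2)) := by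
  have hθ' : θ ≠ 0 := ne_of_gt hθ
  have hlt : m1 * m2 / (4 * θ ^ 2 * g1 * g2) < θ ^ 2 := by
    rw [div_lt_iff₀ (by positivity)]
    nlinarith
  have hle : (0:ℝ) ≤ θ ^ 2 - m1 * m2 / (4 * θ ^ 2 * g1 * g2) := by linarith
  set z := zD θ r1 r2 g1 g2 κ1 κ2 m1 m2 with hzdef
  set n1 := N1D θ r1 r2 g1 g2 κ1 κ2 m1 m2 with hn1def
  set n2 := N2D θ r1 r2 g1 g2 κ1 κ2 m1 m2 with hn2def
  have hz2 : z ^ 2 = θ ^ 2 - m1 * m2 / (4 * θ ^ 2 * g1 * g2) := by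
    rw [hzdef]; simp only [zD]; exact Real.sq_sqrt hle
  have hzpos : 0 < z := by
    rw [hzdef]; simp only [zD]
    exact Real.sqrt_pos.mpr (by linarith)
  have hdpos : 0 < m1 * m2 / (4 * θ ^ 2 * g1 * g2) :=
    div_pos (mul_pos hm1 hm2) (by positivity)
  have hzlt : z < θ := by nlinarith [hz2, hzpos, hdpos]
  have hz2' : m1 * m2 = 4 * θ ^ 2 * g1 * g2 * (θ ^ 2 - z ^ 2) := by
    rw [hz2]; field_simp; ring
  have hp1 : m1 * m2 / (4 * θ ^ 2 * g2) = g1 * (θ ^ 2 - z ^ 2) := by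
    rw [hz2']; field_simp
  have hp2 : m1 * m2 / (4 * θ ^ 2 * g1) = g2 * (θ ^ 2 - z ^ 2) := by
    rw [hz2']; field_simp
  have hκn1 : κ1 * n1 = g1 * (θ ^ 2 - z ^ 2) + r1 - m1 := by
    rw [hn1def]; simp only [N1D]; rw [hp1]; field_simp
  have hκn2 : κ2 * n2 = g2 * (θ ^ 2 - z ^ 2) + r2 - m2 := by
    rw [hn2def]; simp only [N2D]; rw [hp2]; field_simp
  have hvA1 : R1 θ r1 r2 g1 g2 κ1 κ2 m1 m2 (-z) n1 - m1 = -(2 * g1 * θ * (θ - z)) := by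
    simp only [R1]; rw [hκn1]; ring
  have hvA2 : R2 θ r1 r2 g1 g2 κ1 κ2 m1 m2 (-z) n2 - m2 = -(2 * g2 * θ * (θ + z)) := by
    simp only [R2]; rw [hκn2]; ring
  have hvB1 : R1 θ r1 r2 g1 g2 κ1 κ2 m1 m2 z n1 - m1 = -(2 * g1 * θ * (θ + z)) := by
    simp only [R1]; rw [hκn1]; ring
  have hvB2 : R2 θ r1 r2 g1 g2 κ1 κ2 m1 m2 z n2 - m2 = -(2 * g2 * θ * (θ - z)) := by
    simp only [R2]; rw [hκn2]; ring
  have hd1 : (R1 θ r1 r2 g1 g2 κ1 κ2 m1 m2 (-z) n1 - m1) * (R2 θ r1 r2 g1 g2 κ1 κ2 m1 m2 (-z) n2 - m2) = m1 * m2 := by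
    rw [hvA1, hvA2]; linear_combination -hz2'
  have hd2 : (R1 θ r1 r2 g1 g2 κ1 κ2 m1 m2 z n1 - m1) * (R2 θ r1 r2 g1 g2 κ1 κ2 m1 m2 z n2 - m2) = m1 * m2 := by
    rw [hvB1, hvB2]; linear_combination -hz2'
  have hΔv : Δdim θ r1 r2 g1 g2 κ1 κ2 m1 m2 = 8 * θ ^ 2 * g1 * g2 * z * (θ - z) := by
    simp only [Δdim]
    rw [← hzdef, ← hn1def, ← hn2def, hvA1, hvB2]
    linear_combination hz2'
  have hΔpos : 0 < Δdim θ r1 r2 g1 g2 κ1 κ2 m1 m2 := by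
    rw [hΔv]
    exact mul_pos (mul_pos (by positivity) hzpos) (by linarith)
  have hΔ0 : Δdim θ r1 r2 g1 g2 κ1 κ2 m1 m2 ≠ 0 := ne_of_gt hΔpos
  have hAB : R1 θ r1 r2 g1 g2 κ1 κ2 m1 m2 (-z) n1 - R1 θ r1 r2 g1 g2 κ1 κ2 m1 m2 z n1 ≠ 0 := by
    have h : R1 θ r1 r2 g1 g2 κ1 κ2 m1 m2 (-z) n1 - R1 θ r1 r2 g1 g2 κ1 κ2 m1 m2 z n1
        = 4 * g1 * θ * z := by linear_combination hvA1 - hvB1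
    rw [h]; positivity
  have hΔdef : Δdim θ r1 r2 g1 g2 κ1 κ2 m1 m2 = m1 * m2 -
      (R1 θ r1 r2 g1 g2 κ1 κ2 m1 m2 (-z) n1 - m1) * (R2 θ r1 r2 g1 g2 κ1 κ2 m1 m2 z n2 - m2) := by
    simp only [Δdim]; rfl
  have hq3 : q3 θ r1 r2 g1 g2 κ1 κ2 m1 m2 = m1 * n1 + (R2 θ r1 r2 g1 g2 κ1 κ2 m1 m2 z n2 - m2) * n2 := by
    simp only [q3]; rfl
  have hq2 : q2 θ r1 r2 g1 g2 κ1 κ2 m1 m2 = m2 * n2 + (R1 θ r1 r2 g1 g2 κ1 κ2 m1 m2 (-z) n1 - m1) * n1 := by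
    simp only [q2]; rfl
  have H := aux_dim (R1 θ r1 r2 g1 g2 κ1 κ2 m1 m2 (-z) n1) (R2 θ r1 r2 g1 g2 κ1 κ2 m1 m2 (-z) n2)
    (R1 θ r1 r2 g1 g2 κ1 κ2 m1 m2 z n1) (R2 θ r1 r2 g1 g2 κ1 κ2 m1 m2 z n2) n1 n2 m1 m2
    (Δdim θ r1 r2 g1 g2 κ1 κ2 m1 m2) (q2 θ r1 r2 g1 g2 κ1 κ2 m1 m2) (q3 θ r1 r2 g1 g2 κ1 κ2 m1 m2)
    (ne_of_gt hm2) hΔ0 hAB hd1 hd2 hΔdef hq3 hq2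
  refine ⟨hΔpos, H.1, fun a b c d h => H.2 a b c d h, ?_⟩
  -- positivity characterization
  have hposA : 0 < -(R1 θ r1 r2 g1 g2 κ1 κ2 m1 m2 (-z) n1) + m1 := by
    have h2 : 0 < 2 * g1 * θ * (θ - z) := mul_pos (by positivity) (by linarith)
    linarith [hvA1]
  have hposB : 0 < -(R2 θ r1 r2 g1 g2 κ1 κ2 m1 m2 z n2) + m2 := by
    have h2 : 0 < 2 * g2 * θ * (θ - z) := mul_pos (by positivity) (by linarith)
    linarith [hvB2]
  constructor
  · rintro ⟨h1, h2, h3, h4⟩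
    have hq3d : 0 < q3 θ r1 r2 g1 g2 κ1 κ2 m1 m2 / Δdim θ r1 r2 g1 g2 κ1 κ2 m1 m2 := by
      rcases mul_pos_iff.mp h1 with ⟨hx, _⟩ | ⟨_, hy⟩
      · exact hx
      · linarith
    have hq2d : 0 < q2 θ r1 r2 g1 g2 κ1 κ2 m1 m2 / Δdim θ r1 r2 g1 g2 κ1 κ2 m1 m2 := by
      rcases mul_pos_iff.mp h4 with ⟨hx, _⟩ | ⟨_, hy⟩
      · exact hx
      · linarith
    constructor
    · have := mul_pos hq2d hΔpos
      rwa [div_mul_cancel₀ _ hΔ0] at this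
    · have := mul_pos hq3d hΔpos
      rwa [div_mul_cancel₀ _ hΔ0] at this
  · rintro ⟨h2, h3⟩
    have hq3d := div_pos h3 hΔpos
    have hq2d := div_pos h2 hΔpos
    exact ⟨mul_pos hq3d hm2, mul_pos hq3d hposA, mul_pos hq2d hposB, mul_pos hq2d hm1⟩
end
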